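/- The number of involutions of length n avoiding 123 and containing the pattern 132 exactly once equals 2^((n−3)/2) if n is odd with n ≥ 3, and 0 if n is even. Also, the number of involutions of length n avoiding 1234 and containing 132 exactly once equals F_{n−3} for n ≥ 3 (F_0=F_1=1). -/
import Mathlib


def IsInvolution {n : ℕ} (π : Equiv.Perm (Fin n)) : Prop := ∀ i, π (π i) = i

def Avoids132 {n : ℕ} (π : Equiv.Perm (Fin n)) : Prop :=
  ¬ ∃ i j k : Fin n, i < j ∧ j < k ∧ π i < π k ∧ π k < π j

def fixCount {n : ℕ} (π : Equiv.Perm (Fin n)) : ℕ :=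
  (Finset.univ.filter fun i => π i = i).card

def Contains132Once {n : ℕ} (π : Equiv.Perm (Fin n)) : Prop :=
  (Finset.univ.filter fun t : Fin n × Fin n × Fin n =>
    t.1 < t.2.1 ∧ t.2.1 < t.2.2 ∧ π t.1 < π t.2.2 ∧ π t.2.2 < π t.2.1).card = 1

def Avoids123 {n : ℕ} (π : Equiv.Perm (Fin n)) : Prop :=
  ¬ ∃ i j k : Fin n, i < j ∧ j < k ∧ π i < π j ∧ π j < π k

def Avoids1234 {n : ℕ} (π : Equiv.Perm (Fin n)) : Prop :=
  ¬ ∃ i j k l : Fin n, i < j ∧ j < k ∧ k < l ∧ π i < π j ∧ π j < π k ∧ π k < π l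



open Equiv Finset

namespace S19

/-- Remove position `p` and value `q p` from a permutation, renormalizing. -/
def delAt {m : ℕ} (p : Fin (m+1)) (q : Equiv.Perm (Fin (m+1))) : Equiv.Perm (Fin m) :=
  (finSuccAboveEquiv p).trans ((q.subtypeEquiv
    (fun _ => (not_congr q.apply_eq_iff_eq).symm)).trans (finSuccAboveEquiv (q p)).symm)

lemma delAt_spec {m : ℕ} (p : Fin (m+1)) (q : Equiv.Perm (Fin (m+1))) (j : Fin m) :
    (q p).succAbove (delAt p q j) = q (p.succAbove j) := by
  have h : (finSuccAboveEquiv (q p)) (delAt p q j)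
      = ⟨q (p.succAbove j), fun hc => (p.succAbove_ne j) (q.injective hc)⟩ := by
    simp [delAt, Equiv.trans_apply, Equiv.subtypeEquiv_apply, finSuccAboveEquiv_apply]
  simpa [finSuccAboveEquiv_apply] using congrArg Subtype.val h

/-- Insert value `c` at position `p`. -/
def insAt {m : ℕ} (p c : Fin (m+1)) (r : Equiv.Perm (Fin m)) : Equiv.Perm (Fin (m+1)) :=
  (finSuccEquiv' p).trans ((Equiv.optionCongr r).trans (finSuccEquiv' c).symm)

lemma insAt_self {m : ℕ} (p c : Fin (m+1)) (r : Equiv.Perm (Fin m)) : insAt p c r p = c := by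
  simp [insAt, Equiv.trans_apply]

lemma insAt_spec {m : ℕ} (p c : Fin (m+1)) (r : Equiv.Perm (Fin m)) (j : Fin m) :
    insAt p c r (p.succAbove j) = c.succAbove (r j) := by
  simp [insAt, Equiv.trans_apply, finSuccEquiv'_succAbove, finSuccEquiv'_symm_some]

lemma delAt_insAt {m : ℕ} (p c : Fin (m+1)) (r : Equiv.Perm (Fin m)) :
    delAt p (insAt p c r) = r := by
  ext j
  have h1 := delAt_spec p (insAt p c r) j
  rw [insAt_spec, insAt_self] at h1
  exact congrArg Fin.val ((Fin.succAbove_right_injective (p := c)) h1)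

lemma insAt_delAt {m : ℕ} (p : Fin (m+1)) (q : Equiv.Perm (Fin (m+1))) :
    insAt p (q p) (delAt p q) = q := by
  ext i
  rcases eq_or_ne i p with rfl | h
  · rw [insAt_self]
  · obtain ⟨j, rfl⟩ := Fin.exists_succAbove_eq h
    rw [insAt_spec, delAt_spec]

lemma delAt_lt_iff {m : ℕ} (p : Fin (m+1)) (q : Equiv.Perm (Fin (m+1))) (j j' : Fin m) :
    delAt p q j < delAt p q j' ↔ q (p.succAbove j) < q (p.succAbove j') := by
  rw [← Fin.succAbove_lt_succAbove_iff (p := q p), delAt_spec, delAt_spec]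

lemma succAbove_val {m : ℕ} (p : Fin (m+1)) (i : Fin m) :
    ((p.succAbove i : Fin (m+1)) : ℕ) = if (i : ℕ) < (p : ℕ) then (i : ℕ) else (i : ℕ) + 1 := by
  rw [Fin.succAbove]
  split_ifs with h1 h2 h2
  · rfl
  · exact absurd (show (i:ℕ) < (p:ℕ) from h1) h2
  · exact absurd (show Fin.castSucc i < p from h2) h1
  · rfl

lemma delAt_val {m : ℕ} (p : Fin (m+1)) (q : Equiv.Perm (Fin (m+1))) (j : Fin m) :
    (q (p.succAbove j) : ℕ)
      = if ((delAt p q j : Fin m) : ℕ) < (q p : ℕ) then ((delAt p q j : Fin m) : ℕ)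
        else ((delAt p q j : Fin m) : ℕ) + 1 := by
  rw [← delAt_spec, succAbove_val]

/-- the value `m-2` occurs before the value `m-1`. -/
def Dcond {m : ℕ} (r : Equiv.Perm (Fin m)) : Prop :=
  ∃ j k : Fin m, j < k ∧ (r j : ℕ) + 2 = m ∧ (r k : ℕ) + 1 = m

/-- upward transfer of patterns -/
lemma up132 {m : ℕ} (p : Fin (m+1)) (q : Equiv.Perm (Fin (m+1)))
    (h : Avoids132 q) : Avoids132 (delAt p q) := by
  rintro ⟨x, y, z, h1, h2, h3, h4⟩
  exact h ⟨p.succAbove x, p.succAbove y, p.succAbove z,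
    Fin.succAbove_lt_succAbove_iff.mpr h1, Fin.succAbove_lt_succAbove_iff.mpr h2,
    (delAt_lt_iff p q x z).mp h3, (delAt_lt_iff p q z y).mp h4⟩

lemma up123 {m : ℕ} (p : Fin (m+1)) (q : Equiv.Perm (Fin (m+1)))
    (h : Avoids123 q) : Avoids123 (delAt p q) := by
  rintro ⟨x, y, z, h1, h2, h3, h4⟩
  exact h ⟨p.succAbove x, p.succAbove y, p.succAbove z,
    Fin.succAbove_lt_succAbove_iff.mpr h1, Fin.succAbove_lt_succAbove_iff.mpr h2,
    (delAt_lt_iff p q x y).mp h3, (delAt_lt_iff p q y z).mp h4⟩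

lemma up1234 {m : ℕ} (p : Fin (m+1)) (q : Equiv.Perm (Fin (m+1)))
    (h : Avoids1234 q) : Avoids1234 (delAt p q) := by
  rintro ⟨x, y, z, w, h1, h2, h3, h4, h5, h6⟩
  exact h ⟨p.succAbove x, p.succAbove y, p.succAbove z, p.succAbove w,
    Fin.succAbove_lt_succAbove_iff.mpr h1, Fin.succAbove_lt_succAbove_iff.mpr h2,
    Fin.succAbove_lt_succAbove_iff.mpr h3,
    (delAt_lt_iff p q x y).mp h4, (delAt_lt_iff p q y z).mp h5, (delAt_lt_iff p q z w).mp h6⟩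

/-- downward transfer at front position: occurrences not involving position 0 -/
lemma down132 {m : ℕ} (q : Equiv.Perm (Fin (m+1))) (h : Avoids132 (delAt 0 q))
    (h0 : ∀ j k : Fin (m+1), 0 < j → j < k → q 0 < q k → q k < q j → False) :
    Avoids132 q := by
  rintro ⟨i, j, k, h1, h2, h3, h4⟩
  rcases eq_or_ne i 0 with rfl | hi
  · exact h0 j k h1 h2 h3 h4
  · obtain ⟨i', rfl⟩ := Fin.exists_succAbove_eq hi
    obtain ⟨j', rfl⟩ := Fin.exists_succAbove_eq (show j ≠ 0 from Fin.pos_iff_ne_zero.mp (lt_trans (Fin.pos_iff_ne_zero.mpr hi) h1))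
    obtain ⟨k', rfl⟩ := Fin.exists_succAbove_eq (show k ≠ 0 from Fin.pos_iff_ne_zero.mp (lt_trans (lt_trans (Fin.pos_iff_ne_zero.mpr hi) h1) h2))
    exact h ⟨i', j', k', Fin.succAbove_lt_succAbove_iff.mp h1,
      Fin.succAbove_lt_succAbove_iff.mp h2,
      (delAt_lt_iff 0 q i' k').mpr h3, (delAt_lt_iff 0 q k' j').mpr h4⟩

lemma down123 {m : ℕ} (q : Equiv.Perm (Fin (m+1))) (h : Avoids123 (delAt 0 q))
    (h0 : ∀ j k : Fin (m+1), 0 < j → j < k → q 0 < q j → q j < q k → False) :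
    Avoids123 q := by
  rintro ⟨i, j, k, h1, h2, h3, h4⟩
  rcases eq_or_ne i 0 with rfl | hi
  · exact h0 j k h1 h2 h3 h4
  · obtain ⟨i', rfl⟩ := Fin.exists_succAbove_eq hi
    obtain ⟨j', rfl⟩ := Fin.exists_succAbove_eq (show j ≠ 0 from Fin.pos_iff_ne_zero.mp (lt_trans (Fin.pos_iff_ne_zero.mpr hi) h1))
    obtain ⟨k', rfl⟩ := Fin.exists_succAbove_eq (show k ≠ 0 from Fin.pos_iff_ne_zero.mp (lt_trans (lt_trans (Fin.pos_iff_ne_zero.mpr hi) h1) h2))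
    exact h ⟨i', j', k', Fin.succAbove_lt_succAbove_iff.mp h1,
      Fin.succAbove_lt_succAbove_iff.mp h2,
      (delAt_lt_iff 0 q i' j').mpr h3, (delAt_lt_iff 0 q j' k').mpr h4⟩

lemma down1234 {m : ℕ} (q : Equiv.Perm (Fin (m+1))) (h : Avoids1234 (delAt 0 q))
    (h0 : ∀ j k l : Fin (m+1), 0 < j → j < k → k < l → q 0 < q j → q j < q k → q k < q l → False) :
    Avoids1234 q := by
  rintro ⟨i, j, k, l, h1, h2, h3, h4, h5, h6⟩
  rcases eq_or_ne i 0 with rfl | hi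
  · exact h0 j k l h1 h2 h3 h4 h5 h6
  · obtain ⟨i', rfl⟩ := Fin.exists_succAbove_eq hi
    obtain ⟨j', rfl⟩ := Fin.exists_succAbove_eq (show j ≠ 0 from Fin.pos_iff_ne_zero.mp (lt_trans (Fin.pos_iff_ne_zero.mpr hi) h1))
    obtain ⟨k', rfl⟩ := Fin.exists_succAbove_eq (show k ≠ 0 from Fin.pos_iff_ne_zero.mp (lt_trans (lt_trans (Fin.pos_iff_ne_zero.mpr hi) h1) h2))
    obtain ⟨l', rfl⟩ := Fin.exists_succAbove_eq (show l ≠ 0 from Fin.pos_iff_ne_zero.mp (lt_trans (lt_trans (lt_trans (Fin.pos_iff_ne_zero.mpr hi) h1) h2) h3))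
    exact h ⟨i', j', k', l', Fin.succAbove_lt_succAbove_iff.mp h1,
      Fin.succAbove_lt_succAbove_iff.mp h2, Fin.succAbove_lt_succAbove_iff.mp h3,
      (delAt_lt_iff 0 q i' j').mpr h4, (delAt_lt_iff 0 q j' k').mpr h5,
      (delAt_lt_iff 0 q k' l').mpr h6⟩

end S19

namespace S19

/-- generic fiber bijection -/
def fiberEquiv {m : ℕ} (p c : Fin (m+1)) (P : Equiv.Perm (Fin (m+1)) → Prop)
    (P' : Equiv.Perm (Fin m) → Prop)
    (h1 : ∀ q : Equiv.Perm (Fin (m+1)), q p = c → (P q ↔ P' (delAt p q))) :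
    {q : Equiv.Perm (Fin (m+1)) // P q ∧ q p = c} ≃ {r : Equiv.Perm (Fin m) // P' r} where
  toFun x := ⟨delAt p x.1, (h1 x.1 x.2.2).mp x.2.1⟩
  invFun y := ⟨insAt p c y.1,
    ⟨(h1 _ (insAt_self p c y.1)).mpr (by rw [delAt_insAt]; exact y.2), insAt_self p c y.1⟩⟩
  left_inv x := Subtype.ext (by
    show insAt p c (delAt p x.1) = x.1
    have h := insAt_delAt p x.1
    rw [x.2.2] at h
    exact h)
  right_inv y := Subtype.ext (delAt_insAt p c y.1)

lemma card_split {α : Type*} [Finite α] (P Q : α → Prop) :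
    Nat.card {a // P a} = Nat.card {a // P a ∧ Q a} + Nat.card {a // P a ∧ ¬ Q a} := by
  classical
  have e : {a // P a} ≃ {a // P a ∧ Q a} ⊕ {a // P a ∧ ¬ Q a} := {
    toFun := fun x => if h : Q x.1 then Sum.inl ⟨x.1, x.2, h⟩ else Sum.inr ⟨x.1, x.2, h⟩
    invFun := Sum.elim (fun y => ⟨y.1, y.2.1⟩) (fun y => ⟨y.1, y.2.1⟩)
    left_inv := fun x => by by_cases h : Q x.1 <;> simp [h]
    right_inv := fun y => by rcases y with y | y <;> simp [y.2.2] }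
  rw [Nat.card_congr e, Nat.card_sum]

lemma card_fiber_sum {α ι : Type*} [Finite α] [Fintype ι] (P : α → Prop) (f : α → ι) :
    Nat.card {a // P a} = ∑ c : ι, Nat.card {a // P a ∧ f a = c} := by
  classical
  haveI := Fintype.ofFinite α
  calc Nat.card {a // P a}
      = Nat.card (Σ c : ι, {x : {a // P a} // f x.1 = c}) :=
        (Nat.card_congr (Equiv.sigmaFiberEquiv (fun x : {a // P a} => f x.1))).symm
    _ = ∑ c, Nat.card {x : {a // P a} // f x.1 = c} := by
        rw [Nat.card_eq_fintype_card, Fintype.card_sigma]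
        exact Finset.sum_congr rfl fun c _ => (Nat.card_eq_fintype_card).symm
    _ = ∑ c, Nat.card {a // P a ∧ f a = c} :=
        Finset.sum_congr rfl fun c _ =>
          Nat.card_congr (Equiv.subtypeSubtypeEquivSubtypeInter (fun a => P a) (fun a => f a = c))

def Bc {M : ℕ} (q : Equiv.Perm (Fin M)) : Prop := Avoids132 q ∧ Avoids1234 q
def Nc {M : ℕ} (q : Equiv.Perm (Fin M)) : Prop := Avoids132 q ∧ Avoids123 q

noncomputable def cB (M : ℕ) : ℕ := Nat.card {q : Equiv.Perm (Fin M) // Bc q}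
noncomputable def cD (M : ℕ) : ℕ := Nat.card {q : Equiv.Perm (Fin M) // Bc q ∧ Dcond q}
noncomputable def cN (M : ℕ) : ℕ := Nat.card {q : Equiv.Perm (Fin M) // Nc q}

lemma G1iffB {m : ℕ} (c : Fin (m+1)) (hc : (c : ℕ) = m) (q : Equiv.Perm (Fin (m+1)))
    (h0 : q 0 = c) : Bc q ↔ Bc (delAt 0 q) := by
  have hv : (q 0 : ℕ) = m := by rw [h0, hc]
  constructor
  · exact fun ⟨hA, hB⟩ => ⟨up132 0 q hA, up1234 0 q hB⟩
  · rintro ⟨hA, hB⟩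
    refine ⟨down132 q hA ?_, down1234 q hB ?_⟩
    · intro j k _ _ h3 _
      have := Fin.lt_def.mp h3; have := Fin.is_le (q k); omega
    · intro j k l _ _ _ h4 _ _
      have := Fin.lt_def.mp h4; have := Fin.is_le (q j); omega

lemma G1iffN {m : ℕ} (c : Fin (m+1)) (hc : (c : ℕ) = m) (q : Equiv.Perm (Fin (m+1)))
    (h0 : q 0 = c) : Nc q ↔ Nc (delAt 0 q) := by
  have hv : (q 0 : ℕ) = m := by rw [h0, hc]
  constructor
  · exact fun ⟨hA, hB⟩ => ⟨up132 0 q hA, up123 0 q hB⟩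
  · rintro ⟨hA, hB⟩
    refine ⟨down132 q hA ?_, down123 q hB ?_⟩
    · intro j k _ _ h3 _
      have := Fin.lt_def.mp h3; have := Fin.is_le (q k); omega
    · intro j k _ _ h3 _
      have := Fin.lt_def.mp h3; have := Fin.is_le (q j); omega

lemma G2iffB {m : ℕ} (c : Fin (m+1)) (hc : (c : ℕ) + 2 = m + 1) (q : Equiv.Perm (Fin (m+1)))
    (h0 : q 0 = c) : Bc q ↔ Bc (delAt 0 q) := by
  have hv : (q 0 : ℕ) + 2 = m + 1 := by rw [h0]; exact hc
  constructor
  · exact fun ⟨hA, hB⟩ => ⟨up132 0 q hA, up1234 0 q hB⟩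
  · rintro ⟨hA, hB⟩
    refine ⟨down132 q hA ?_, down1234 q hB ?_⟩
    · intro j k _ _ h3 h4
      have := Fin.lt_def.mp h3; have := Fin.lt_def.mp h4; have := Fin.is_le (q j); omega
    · intro j k l _ _ _ h4 h5 h6
      have := Fin.lt_def.mp h4; have := Fin.lt_def.mp h5; have := Fin.lt_def.mp h6
      have := Fin.is_le (q l); omega

lemma G2iffN {m : ℕ} (c : Fin (m+1)) (hc : (c : ℕ) + 2 = m + 1) (q : Equiv.Perm (Fin (m+1)))
    (h0 : q 0 = c) : Nc q ↔ Nc (delAt 0 q) := by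
  have hv : (q 0 : ℕ) + 2 = m + 1 := by rw [h0]; exact hc
  constructor
  · exact fun ⟨hA, hB⟩ => ⟨up132 0 q hA, up123 0 q hB⟩
  · rintro ⟨hA, hB⟩
    refine ⟨down132 q hA ?_, down123 q hB ?_⟩
    · intro j k _ _ h3 h4
      have := Fin.lt_def.mp h3; have := Fin.lt_def.mp h4; have := Fin.is_le (q j); omega
    · intro j k _ _ h3 h4
      have := Fin.lt_def.mp h3; have := Fin.lt_def.mp h4; have := Fin.is_le (q k); omega

end S19

namespace S19

lemma symm_ne_zero {m : ℕ} (q : Equiv.Perm (Fin (m+1))) (v : Fin (m+1))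
    (h : v ≠ q 0) : q.symm v ≠ 0 := by
  intro h0
  exact h (by rw [← q.apply_symm_apply v, h0])

lemma exists_pos_val {m : ℕ} (q : Equiv.Perm (Fin (m+1))) (v : ℕ) (hvm : v < m + 1)
    (hne : (q 0 : ℕ) ≠ v) : ∃ p : Fin (m+1), 0 < p ∧ (q p : ℕ) = v := by
  refine ⟨q.symm ⟨v, hvm⟩, Fin.pos_iff_ne_zero.mpr (symm_ne_zero q _ ?_), by rw [q.apply_symm_apply]⟩
  intro h
  exact hne (by rw [← h])

lemma G3iffB {m : ℕ} (c : Fin (m+1)) (hc : (c : ℕ) + 3 = m + 1) (q : Equiv.Perm (Fin (m+1)))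
    (h0 : q 0 = c) : Bc q ↔ Bc (delAt 0 q) ∧ Dcond (delAt 0 q) := by
  have hv : (q 0 : ℕ) + 3 = m + 1 := by rw [h0]; exact hc
  constructor
  · rintro ⟨hA, hB⟩
    refine ⟨⟨up132 0 q hA, up1234 0 q hB⟩, ?_⟩
    obtain ⟨p1, hp1pos, hp1⟩ := exists_pos_val q m (by omega) (by omega)
    obtain ⟨p2, hp2pos, hp2⟩ := exists_pos_val q (m-1) (by omega) (by omega)
    have key : p2 < p1 := by
      rcases lt_trichotomy p1 p2 with h | h | h
      · exact absurd ⟨0, p1, p2, hp1pos, h,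
          Fin.lt_def.mpr (by omega), Fin.lt_def.mpr (by omega)⟩ hA
      · rw [h, hp2] at hp1; omega
      · exact h
    obtain ⟨j, hj⟩ := Fin.exists_succAbove_eq (Fin.pos_iff_ne_zero.mp hp2pos)
    obtain ⟨k, hk⟩ := Fin.exists_succAbove_eq (Fin.pos_iff_ne_zero.mp hp1pos)
    have d1 := delAt_val 0 q j
    have d2 := delAt_val 0 q k
    rw [hj, hp2] at d1
    rw [hk, hp1] at d2
    refine ⟨j, k, ?_, ?_, ?_⟩
    · exact Fin.succAbove_lt_succAbove_iff.mp (by rw [hj, hk]; exact key)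
    · split_ifs at d1 <;> omega
    · split_ifs at d2 <;> omega
  · rintro ⟨⟨hA, hB⟩, hD⟩
    refine ⟨down132 q hA ?_, down1234 q hB ?_⟩
    · intro j k _ hjk h3 h4
      obtain ⟨j', k', hj'k', e1, e2⟩ := hD
      have l3 := Fin.lt_def.mp h3
      have l4 := Fin.lt_def.mp h4
      have bj := Fin.is_le (q j)
      have d1 := delAt_val 0 q j'
      have d2 := delAt_val 0 q k'
      have ejk : Fin.succAbove 0 j' = k := q.injective (Fin.ext (by split_ifs at d1 <;> omega))
      have ekj : Fin.succAbove 0 k' = j := q.injective (Fin.ext (by split_ifs at d2 <;> omega))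
      have hlt := (Fin.succAbove_lt_succAbove_iff (p := 0)).mpr hj'k'
      rw [ejk, ekj] at hlt
      exact absurd hlt (not_lt.mpr hjk.le)
    · intro j k l _ _ _ h4 h5 h6
      have := Fin.lt_def.mp h4; have := Fin.lt_def.mp h5; have := Fin.lt_def.mp h6
      have := Fin.is_le (q l); omega

lemma impB {m : ℕ} (c : Fin (m+1)) (hc : (c:ℕ) + 4 ≤ m + 1) (q : Equiv.Perm (Fin (m+1)))
    (h0 : q 0 = c) (hq : Bc q) : False := by
  have hv : (q 0 : ℕ) + 4 ≤ m + 1 := by rw [h0]; exact hc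
  obtain ⟨p1, hp1pos, hp1⟩ := exists_pos_val q m (by omega) (by omega)
  obtain ⟨p2, hp2pos, hp2⟩ := exists_pos_val q (m-1) (by omega) (by omega)
  obtain ⟨p3, hp3pos, hp3⟩ := exists_pos_val q (m-2) (by omega) (by omega)
  have n12 : p1 ≠ p2 := fun h => by rw [h, hp2] at hp1; omega
  have n13 : p1 ≠ p3 := fun h => by rw [h, hp3] at hp1; omega
  have n23 : p2 ≠ p3 := fun h => by rw [h, hp3] at hp2; omega
  rcases lt_or_gt_of_ne n12 with h12 | h12
  · exact hq.1 ⟨0, p1, p2, hp1pos, h12,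
      Fin.lt_def.mpr (by omega), Fin.lt_def.mpr (by omega)⟩
  · rcases lt_or_gt_of_ne n13 with h13 | h13
    · exact hq.1 ⟨0, p1, p3, hp1pos, h13,
        Fin.lt_def.mpr (by omega), Fin.lt_def.mpr (by omega)⟩
    · rcases lt_or_gt_of_ne n23 with h23 | h23
      · exact hq.1 ⟨0, p2, p3, hp2pos, h23,
          Fin.lt_def.mpr (by omega), Fin.lt_def.mpr (by omega)⟩
      · exact hq.2 ⟨0, p3, p2, p1, hp3pos, h23, h12,
          Fin.lt_def.mpr (by omega), Fin.lt_def.mpr (by omega), Fin.lt_def.mpr (by omega)⟩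

lemma impN {m : ℕ} (c : Fin (m+1)) (hc : (c:ℕ) + 3 ≤ m + 1) (q : Equiv.Perm (Fin (m+1)))
    (h0 : q 0 = c) (hq : Nc q) : False := by
  have hv : (q 0 : ℕ) + 3 ≤ m + 1 := by rw [h0]; exact hc
  obtain ⟨p1, hp1pos, hp1⟩ := exists_pos_val q m (by omega) (by omega)
  obtain ⟨p2, hp2pos, hp2⟩ := exists_pos_val q (m-1) (by omega) (by omega)
  have n12 : p1 ≠ p2 := fun h => by rw [h, hp2] at hp1; omega
  rcases lt_or_gt_of_ne n12 with h12 | h12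
  · exact hq.1 ⟨0, p1, p2, hp1pos, h12,
      Fin.lt_def.mpr (by omega), Fin.lt_def.mpr (by omega)⟩
  · exact hq.2 ⟨0, p2, p1, hp2pos, h12,
      Fin.lt_def.mpr (by omega), Fin.lt_def.mpr (by omega)⟩

lemma impD {m : ℕ} (q : Equiv.Perm (Fin (m+1))) (hv : (q 0 : ℕ) = m) (hD : Dcond q) :
    False := by
  obtain ⟨j, k, hjk, _, e2⟩ := hD
  have h1 : q k = q 0 := Fin.ext (by omega)
  have h2 : k = 0 := q.injective h1
  rw [h2] at hjk
  exact absurd hjk (by simp)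

lemma dcond_of_second {m : ℕ} (q : Equiv.Perm (Fin (m+1))) (hv : (q 0:ℕ) + 2 = m + 1) :
    Dcond q := by
  obtain ⟨p1, hp1pos, hp1⟩ := exists_pos_val q m (by omega) (by omega)
  exact ⟨0, p1, hp1pos, by omega, by omega⟩

lemma dcond_of_third {m : ℕ} (q : Equiv.Perm (Fin (m+1))) (h132 : Avoids132 q)
    (hv : (q 0:ℕ) + 3 = m + 1) : Dcond q := by
  obtain ⟨p1, hp1pos, hp1⟩ := exists_pos_val q m (by omega) (by omega)
  obtain ⟨p2, hp2pos, hp2⟩ := exists_pos_val q (m-1) (by omega) (by omega)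
  have n12 : p1 ≠ p2 := fun h => by rw [h, hp2] at hp1; omega
  have key : p2 < p1 := by
    rcases lt_or_gt_of_ne n12 with h12 | h12
    · exact absurd ⟨0, p1, p2, hp1pos, h12,
        Fin.lt_def.mpr (by omega), Fin.lt_def.mpr (by omega)⟩ h132
    · exact h12
  exact ⟨p2, p1, key, by omega, by omega⟩

end S19

namespace S19

lemma fibB {m : ℕ} (c : Fin (m+1)) :
    Nat.card {q : Equiv.Perm (Fin (m+1)) // Bc q ∧ q 0 = c}
      = if (c:ℕ) = m then cB m else if (c:ℕ)+2 = m+1 then cB m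
        else if (c:ℕ)+3 = m+1 then cD m else 0 := by
  split_ifs with h1 h2 h3
  · exact Nat.card_congr (fiberEquiv 0 c Bc Bc (fun q hq => G1iffB c h1 q hq))
  · exact Nat.card_congr (fiberEquiv 0 c Bc Bc (fun q hq => G2iffB c h2 q hq))
  · exact Nat.card_congr (fiberEquiv 0 c Bc (fun r => Bc r ∧ Dcond r)
      (fun q hq => G3iffB c h3 q hq))
  · have : IsEmpty {q : Equiv.Perm (Fin (m+1)) // Bc q ∧ q 0 = c} :=
      ⟨fun x => impB c (by have := Fin.is_le c; omega) x.1 x.2.2 x.2.1⟩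
    exact Nat.card_of_isEmpty

lemma fibD {m : ℕ} (c : Fin (m+1)) :
    Nat.card {q : Equiv.Perm (Fin (m+1)) // (Bc q ∧ Dcond q) ∧ q 0 = c}
      = if (c:ℕ)+2 = m+1 then cB m else if (c:ℕ)+3 = m+1 then cD m else 0 := by
  split_ifs with h1 h2
  · refine Nat.card_congr (fiberEquiv 0 c _ Bc (fun q hq => ?_))
    constructor
    · rintro ⟨hb, _⟩; exact (G2iffB c h1 q hq).mp hb
    · intro hb
      exact ⟨(G2iffB c h1 q hq).mpr hb, dcond_of_second q (by rw [hq]; exact h1)⟩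
  · refine Nat.card_congr (fiberEquiv 0 c _ (fun r => Bc r ∧ Dcond r) (fun q hq => ?_))
    constructor
    · rintro ⟨hb, _⟩; exact (G3iffB c h2 q hq).mp hb
    · intro hb
      have hbq := (G3iffB c h2 q hq).mpr hb
      exact ⟨hbq, dcond_of_third q hbq.1 (by rw [hq]; exact h2)⟩
  · have : IsEmpty {q : Equiv.Perm (Fin (m+1)) // (Bc q ∧ Dcond q) ∧ q 0 = c} := by
      refine ⟨fun x => ?_⟩
      rcases eq_or_ne (c:ℕ) m with hm | hm
      · exact impD x.1 (by rw [x.2.2]; exact hm) x.2.1.2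
      · exact impB c (by have := Fin.is_le c; omega) x.1 x.2.2 x.2.1.1
    exact Nat.card_of_isEmpty

lemma fibN {m : ℕ} (c : Fin (m+1)) :
    Nat.card {q : Equiv.Perm (Fin (m+1)) // Nc q ∧ q 0 = c}
      = if (c:ℕ) = m then cN m else if (c:ℕ)+2 = m+1 then cN m else 0 := by
  split_ifs with h1 h2
  · exact Nat.card_congr (fiberEquiv 0 c Nc Nc (fun q hq => G1iffN c h1 q hq))
  · exact Nat.card_congr (fiberEquiv 0 c Nc Nc (fun q hq => G2iffN c h2 q hq))
  · have : IsEmpty {q : Equiv.Perm (Fin (m+1)) // Nc q ∧ q 0 = c} :=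
      ⟨fun x => impN c (by have := Fin.is_le c; omega) x.1 x.2.2 x.2.1⟩
    exact Nat.card_of_isEmpty

lemma down132L {m : ℕ} (q : Equiv.Perm (Fin (m+1))) (h : Avoids132 (delAt (Fin.last m) q))
    (h0 : (q (Fin.last m) : ℕ) = 0) : Avoids132 q := by
  rintro ⟨i, j, k, h1, h2, h3, h4⟩
  rcases eq_or_ne k (Fin.last m) with rfl | hk
  · have := Fin.lt_def.mp h3; omega
  · obtain ⟨k', rfl⟩ := Fin.exists_succAbove_eq hk
    have hkl : Fin.succAbove (Fin.last m) k' < Fin.last m :=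
      lt_of_le_of_ne (Fin.le_last _) hk
    obtain ⟨j', rfl⟩ := Fin.exists_succAbove_eq (ne_of_lt (lt_trans h2 hkl))
    obtain ⟨i', rfl⟩ := Fin.exists_succAbove_eq (ne_of_lt (lt_trans h1 (lt_trans h2 hkl)))
    exact h ⟨i', j', k', Fin.succAbove_lt_succAbove_iff.mp h1,
      Fin.succAbove_lt_succAbove_iff.mp h2,
      (delAt_lt_iff _ q i' k').mpr h3, (delAt_lt_iff _ q k' j').mpr h4⟩

lemma down1234L {m : ℕ} (q : Equiv.Perm (Fin (m+1))) (h : Avoids1234 (delAt (Fin.last m) q))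
    (h0 : (q (Fin.last m) : ℕ) = 0) : Avoids1234 q := by
  rintro ⟨i, j, k, l, h1, h2, h3, h4, h5, h6⟩
  rcases eq_or_ne l (Fin.last m) with rfl | hl
  · have := Fin.lt_def.mp h6; omega
  · obtain ⟨l', rfl⟩ := Fin.exists_succAbove_eq hl
    have hll : Fin.succAbove (Fin.last m) l' < Fin.last m :=
      lt_of_le_of_ne (Fin.le_last _) hl
    obtain ⟨k', rfl⟩ := Fin.exists_succAbove_eq (ne_of_lt (lt_trans h3 hll))
    obtain ⟨j', rfl⟩ := Fin.exists_succAbove_eq (ne_of_lt (lt_trans h2 (lt_trans h3 hll)))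
    obtain ⟨i', rfl⟩ := Fin.exists_succAbove_eq
      (ne_of_lt (lt_trans h1 (lt_trans h2 (lt_trans h3 hll))))
    exact h ⟨i', j', k', l', Fin.succAbove_lt_succAbove_iff.mp h1,
      Fin.succAbove_lt_succAbove_iff.mp h2, Fin.succAbove_lt_succAbove_iff.mp h3,
      (delAt_lt_iff _ q i' j').mpr h4, (delAt_lt_iff _ q j' k').mpr h5,
      (delAt_lt_iff _ q k' l').mpr h6⟩

lemma lastIffB {m : ℕ} (q : Equiv.Perm (Fin (m+1))) (hq : q (Fin.last m) = 0) :
    Bc q ↔ Bc (delAt (Fin.last m) q) := by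
  have h0 : (q (Fin.last m) : ℕ) = 0 := by rw [hq]; rfl
  constructor
  · exact fun ⟨hA, hB⟩ => ⟨up132 _ q hA, up1234 _ q hB⟩
  · exact fun ⟨hA, hB⟩ => ⟨down132L q hA h0, down1234L q hB h0⟩

lemma card_last_zero (m : ℕ) :
    Nat.card {q : Equiv.Perm (Fin (m+1)) // Bc q ∧ q (Fin.last m) = 0} = cB m :=
  Nat.card_congr (fiberEquiv (Fin.last m) 0 Bc Bc lastIffB)

-- base cases
lemma cB1 : cB 1 = 1 := by
  have hall : ∀ q : Equiv.Perm (Fin 1), Bc q := by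
    intro q
    constructor
    · rintro ⟨i, j, k, h1, _, _, _⟩
      have := Fin.lt_def.mp h1; have := i.is_le; have := j.is_le; omega
    · rintro ⟨i, j, k, l, h1, _, _, _, _, _⟩
      have := Fin.lt_def.mp h1; have := i.is_le; have := j.is_le; omega
  rw [cB, Nat.card_congr (Equiv.subtypeUnivEquiv hall)]
  simp [Nat.card_eq_fintype_card]

lemma cN1 : cN 1 = 1 := by
  have hall : ∀ q : Equiv.Perm (Fin 1), Nc q := by
    intro q
    constructor
    · rintro ⟨i, j, k, h1, _, _, _⟩
      have := Fin.lt_def.mp h1; have := i.is_le; have := j.is_le; omega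
    · rintro ⟨i, j, k, h1, _, _, _⟩
      have := Fin.lt_def.mp h1; have := i.is_le; have := j.is_le; omega
  rw [cN, Nat.card_congr (Equiv.subtypeUnivEquiv hall)]
  simp [Nat.card_eq_fintype_card]

lemma cD1 : cD 1 = 0 := by
  have : IsEmpty {q : Equiv.Perm (Fin 1) // Bc q ∧ Dcond q} := by
    refine ⟨fun x => ?_⟩
    obtain ⟨j, k, _, e1, _⟩ := x.2.2
    omega
  rw [cD]; exact Nat.card_of_isEmpty

end S19

namespace S19

lemma sum_three (A B C m : ℕ) (hC : m = 0 → C = 0) :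
    ∑ x ∈ Finset.range (m+2), (if x = m+1 then A else if x + 2 = m + 2 then B
      else if x + 3 = m + 2 then C else 0) = A + B + C := by
  rcases m with _ | k
  · rw [hC rfl]
    rw [Finset.sum_range_succ, Finset.sum_range_succ, Finset.sum_range_zero]
    rw [if_neg (by omega), if_pos (by omega), if_pos (by omega)]
    omega
  · rw [show k+1+2 = k+3 from rfl]
    rw [Finset.sum_range_succ, Finset.sum_range_succ, Finset.sum_range_succ]
    rw [Finset.sum_eq_zero (fun x hx => by
      rw [Finset.mem_range] at hx
      rw [if_neg (by omega), if_neg (by omega), if_neg (by omega)])]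
    rw [if_neg (by omega), if_neg (by omega), if_pos (by omega)]
    rw [if_neg (by omega), if_pos (by omega)]
    rw [if_pos (by omega)]
    omega

lemma sum_two (B C m : ℕ) (hC : m = 0 → C = 0) :
    ∑ x ∈ Finset.range (m+2), (if x + 2 = m + 2 then B
      else if x + 3 = m + 2 then C else 0) = B + C := by
  rcases m with _ | k
  · rw [hC rfl]
    rw [Finset.sum_range_succ, Finset.sum_range_succ, Finset.sum_range_zero]
    rw [if_pos (by omega), if_neg (by omega), if_neg (by omega)]
    omega
  · rw [show k+1+2 = k+3 from rfl]
    rw [Finset.sum_range_succ, Finset.sum_range_succ, Finset.sum_range_succ]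
    rw [Finset.sum_eq_zero (fun x hx => by
      rw [Finset.mem_range] at hx
      rw [if_neg (by omega), if_neg (by omega)])]
    rw [if_neg (by omega), if_pos (by omega)]
    rw [if_pos (by omega)]
    rw [if_neg (by omega), if_neg (by omega)]
    omega

lemma sum_n (A B m : ℕ) :
    ∑ x ∈ Finset.range (m+2), (if x = m+1 then A else if x + 2 = m + 2 then B else 0)
      = A + B := by
  rw [Finset.sum_range_succ, Finset.sum_range_succ]
  rw [Finset.sum_eq_zero (fun x hx => by
    rw [Finset.mem_range] at hx
    rw [if_neg (by omega), if_neg (by omega)])]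
  rw [if_neg (by omega), if_pos (by omega)]
  rw [if_pos (by omega)]
  omega

lemma cB_rec (m : ℕ) : cB (m+2) = cB (m+1) + cB (m+1) + cD (m+1) := by
  rw [cB, card_fiber_sum Bc (fun q => q 0)]
  rw [Finset.sum_congr rfl (fun (c : Fin (m+2)) _ => fibB c)]
  rw [Fin.sum_univ_eq_sum_range (fun x => if x = m+1 then cB (m+1)
    else if x+2 = m+2 then cB (m+1) else if x+3 = m+2 then cD (m+1) else 0) (m+2)]
  exact sum_three _ _ _ m (fun h => by rw [h]; exact cD1)

lemma cD_rec (m : ℕ) : cD (m+2) = cB (m+1) + cD (m+1) := by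
  rw [cD, card_fiber_sum (fun q => Bc q ∧ Dcond q) (fun q => q 0)]
  rw [Finset.sum_congr rfl (fun (c : Fin (m+2)) _ => fibD c)]
  rw [Fin.sum_univ_eq_sum_range (fun x =>
    if x+2 = m+2 then cB (m+1) else if x+3 = m+2 then cD (m+1) else 0) (m+2)]
  exact sum_two _ _ m (fun h => by rw [h]; exact cD1)

lemma cN_rec (m : ℕ) : cN (m+2) = cN (m+1) + cN (m+1) := by
  rw [cN, card_fiber_sum Nc (fun q => q 0)]
  rw [Finset.sum_congr rfl (fun (c : Fin (m+2)) _ => fibN c)]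
  rw [Fin.sum_univ_eq_sum_range (fun x => if x = m+1 then cN (m+1)
    else if x+2 = m+2 then cN (m+1) else 0) (m+2)]
  exact sum_n _ _ m

lemma cN_closed (m : ℕ) : cN (m+1) = 2^m := by
  induction m with
  | zero => exact cN1
  | succ k ih => rw [cN_rec, ih]; ring

lemma cBD_closed (m : ℕ) : cB (m+1) = Nat.fib (2*m+1) ∧ cD (m+1) = Nat.fib (2*m) := by
  induction m with
  | zero => exact ⟨by rw [cB1]; rfl, by rw [cD1]; rfl⟩
  | succ k ih =>
    have f1 : Nat.fib (2*k+2) = Nat.fib (2*k) + Nat.fib (2*k+1) := Nat.fib_add_two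
    have f2 : Nat.fib (2*k+3) = Nat.fib (2*k+1) + Nat.fib (2*k+2) := Nat.fib_add_two
    have e1 : 2*(k+1)+1 = 2*k+3 := by ring
    have e2 : 2*(k+1) = 2*k+2 := by ring
    constructor
    · rw [cB_rec, ih.1, ih.2, e1]; omega
    · rw [cD_rec, ih.1, ih.2, e2]; omega

lemma cC_closed (m : ℕ) :
    Nat.card {q : Equiv.Perm (Fin (m+2)) // Bc q ∧ q (Fin.last (m+1)) ≠ 0}
      = Nat.fib (2*m+2) := by
  have h1 := card_split (α := Equiv.Perm (Fin (m+2))) Bc (fun q => q (Fin.last (m+1)) = 0)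
  have h2 := card_last_zero (m+1)
  have h3 : cB (m+2) = Nat.fib (2*m+3) := by
    have := (cBD_closed (m+1)).1
    rwa [show 2*(m+1)+1 = 2*m+3 from by ring] at this
  have h4 : cB (m+1) = Nat.fib (2*m+1) := (cBD_closed m).1
  have f2 : Nat.fib (2*m+3) = Nat.fib (2*m+1) + Nat.fib (2*m+2) := Nat.fib_add_two
  have hh : cB (m+2) = Nat.card {q : Equiv.Perm (Fin (m+2)) // Bc q ∧ q (Fin.last (m+1)) = 0}
      + Nat.card {q : Equiv.Perm (Fin (m+2)) // Bc q ∧ ¬ q (Fin.last (m+1)) = 0} := h1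
  rw [h2, h3, h4] at hh
  have : Nat.card {q : Equiv.Perm (Fin (m+2)) // Bc q ∧ ¬ q (Fin.last (m+1)) = 0}
      = Nat.fib (2*m+2) := by omega
  exact this

end S19

namespace S19

variable {M e : ℕ}

/-- value of q at a ℕ index (clamped) -/
def qv (q : Equiv.Perm (Fin (M+1+e))) (s : ℕ) : ℕ := (q ⟨min s (M+e), by omega⟩ : ℕ)

/-- value of q.symm at a ℕ index (clamped) -/
def qiv (q : Equiv.Perm (Fin (M+1+e))) (v : ℕ) : ℕ := (q.symm ⟨min v (M+e), by omega⟩ : ℕ)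

lemma qv_le (q : Equiv.Perm (Fin (M+1+e))) (s : ℕ) : qv q s ≤ M+e := by
  rw [qv]; have := (q ⟨min s (M+e), by omega⟩).isLt; omega

lemma qiv_le (q : Equiv.Perm (Fin (M+1+e))) (v : ℕ) : qiv q v ≤ M+e := by
  rw [qiv]; have := (q.symm ⟨min v (M+e), by omega⟩).isLt; omega

lemma qv_eq (q : Equiv.Perm (Fin (M+1+e))) (s : Fin (M+1+e)) : qv q (s:ℕ) = (q s : ℕ) := by
  rw [qv]
  congr 2
  exact Fin.ext (by have := s.isLt; simp; omega)

lemma qiv_eq (q : Equiv.Perm (Fin (M+1+e))) (v : Fin (M+1+e)) :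
    qiv q (v:ℕ) = (q.symm v : ℕ) := by
  rw [qiv]
  congr 2
  exact Fin.ext (by have := v.isLt; simp; omega)

lemma qiv_qv (q : Equiv.Perm (Fin (M+1+e))) (s : Fin (M+1+e)) :
    qiv q (qv q (s:ℕ)) = (s:ℕ) := by
  rw [qv_eq, qiv_eq, q.symm_apply_apply]

lemma qv_inj (q : Equiv.Perm (Fin (M+1+e))) (s t : Fin (M+1+e))
    (h : qv q (s:ℕ) = qv q (t:ℕ)) : s = t := by
  rw [qv_eq, qv_eq] at h
  exact q.injective (Fin.ext h)

def PmN (q : Equiv.Perm (Fin (M+1+e))) (s : ℕ) : ℕ :=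
  if s < M then s else if s = M then M+1 else M+2 + qv q (M+1)

def phiN (q : Equiv.Perm (Fin (M+1+e))) (i : ℕ) : ℕ :=
  if i < M then M+2+qv q i
  else if i = M then M
  else if i = M+1 then M+2+qv q M
  else PmN q (qiv q (i-(M+2)))

lemma PmN_le (q : Equiv.Perm (Fin (M+1+e))) (s : ℕ) (hs : s ≤ 2*M+e+2) :
    PmN q s ≤ 2*M+e+2 := by
  have := qv_le q (M+1)
  rw [PmN]; split_ifs <;> omega

lemma phiN_le (q : Equiv.Perm (Fin (M+1+e))) (i : ℕ) (hi : i ≤ 2*M+e+2) :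
    phiN q i ≤ 2*M+e+2 := by
  have h1 := qv_le q i
  have h2 := qv_le q M
  have h3 := qiv_le q (i-(M+2))
  rw [phiN]; split_ifs with g1 g2 g3
  · omega
  · omega
  · omega
  · exact PmN_le q _ (by omega)

lemma phiN_a (q : Equiv.Perm (Fin (M+1+e))) : phiN q M = M := by
  rw [phiN]; split_ifs <;> omega

lemma phiN_Pm (he : e ≤ 1) (q : Equiv.Perm (Fin (M+1+e))) (s : Fin (M+1+e)) :
    phiN q (PmN q (s:ℕ)) = M+2 + (q s : ℕ) := by
  have hs := s.isLt
  have hql := qv_le q (M+1)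
  rw [PmN]
  split_ifs with g1 g2
  · rw [phiN, if_pos g1, qv_eq]
  · rw [phiN, if_neg (by omega), if_neg (by omega), if_pos rfl]
    rw [show qv q M = qv q (s:ℕ) from by rw [g2], qv_eq]
  · -- s.val = M+1
    have hsv : (s:ℕ) = M+1 := by omega
    rw [phiN, if_neg (by omega), if_neg (by omega), if_neg (by omega)]
    rw [show M+2+qv q (M+1) - (M+2) = qv q (M+1) from by omega]
    rw [show qv q (M+1) = qv q (s:ℕ) from by rw [hsv]]
    rw [qiv_qv, PmN, if_neg (by omega), if_neg (by omega)]
    rw [show qv q (M+1) = qv q (s:ℕ) from by rw [hsv], qv_eq]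

lemma phiN_Q (q : Equiv.Perm (Fin (M+1+e))) (t : Fin (M+1+e)) (i : ℕ)
    (hi : i = M+2+(q t : ℕ)) : phiN q i = PmN q (t:ℕ) := by
  have hq := (q t).isLt
  rw [phiN, if_neg (by omega), if_neg (by omega), if_neg (by omega)]
  congr 1
  rw [show i - (M+2) = (q t : ℕ) from by omega, ← qv_eq, qiv_qv]

lemma phiN_invol (he : e ≤ 1) (q : Equiv.Perm (Fin (M+1+e))) (i : ℕ) (hi : i ≤ 2*M+e+2) :
    phiN q (phiN q i) = i := by
  rcases Nat.lt_or_ge i M with h1 | h1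
  · have : phiN q i = M+2+(q ⟨i, by omega⟩ : ℕ) := by
      rw [phiN, if_pos h1, ← qv_eq]
    rw [this, phiN_Q q ⟨i, by omega⟩ _ rfl]
    show PmN q i = i
    rw [PmN, if_pos h1]
  rcases Nat.eq_or_lt_of_le h1 with h2 | h2
  · rw [← h2, phiN_a, phiN_a]
  rcases Nat.lt_or_ge i (M+2) with h3 | h3
  · have hieq : i = M+1 := by omega
    have : phiN q i = M+2+(q ⟨M, by omega⟩ : ℕ) := by
      rw [hieq, phiN, if_neg (by omega), if_neg (by omega), if_pos rfl, ← qv_eq]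
    rw [this, phiN_Q q ⟨M, by omega⟩ _ rfl]
    show PmN q M = i
    rw [PmN, if_neg (by omega), if_pos rfl, hieq]
  · -- i ≥ M+2
    have harg : i - (M+2) < M+1+e := by omega
    have : phiN q i = PmN q ((q.symm ⟨i-(M+2), harg⟩ : ℕ)) := by
      rw [phiN, if_neg (by omega), if_neg (by omega), if_neg (by omega), ← qiv_eq]
    rw [this, phiN_Pm he, q.apply_symm_apply]
    exact show M+2+(i-(M+2)) = i by omega

/-- trichotomy of positions -/
lemma triN (he : e ≤ 1) (q : Equiv.Perm (Fin (M+1+e))) (i : ℕ) (hi : i ≤ 2*M+e+2) :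
    i = M ∨ (∃ s : Fin (M+1+e), i = PmN q (s:ℕ)) ∨
      (∃ t : Fin (M+1+e), (t:ℕ) ≤ M ∧ i = M+2+(q t : ℕ)) := by
  rcases Nat.lt_or_ge i M with h1 | h1
  · exact Or.inr (Or.inl ⟨⟨i, by omega⟩, show i = PmN q i from by rw [PmN, if_pos h1]⟩)
  rcases Nat.eq_or_lt_of_le h1 with h2 | h2
  · exact Or.inl h2.symm
  rcases Nat.lt_or_ge i (M+2) with h3 | h3
  · exact Or.inr (Or.inl ⟨⟨M, by omega⟩, show i = PmN q M from by
      rw [PmN, if_neg (by omega), if_pos rfl]; omega⟩)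
  · set t := q.symm ⟨i-(M+2), by omega⟩ with ht
    have hqt : (q t : ℕ) = i - (M+2) := by rw [ht, q.apply_symm_apply]
    rcases Nat.lt_or_ge (t:ℕ) (M+1) with h4 | h4
    · exact Or.inr (Or.inr ⟨t, by omega, by omega⟩)
    · have htv : (t:ℕ) = M+1 := by have := t.isLt; omega
      refine Or.inr (Or.inl ⟨t, ?_⟩)
      rw [PmN, if_neg (by omega), if_neg (by omega)]
      rw [show qv q (M+1) = qv q (t:ℕ) from by rw [htv], qv_eq]
      omega

lemma PmN_lt_iff (he : e ≤ 1) (q : Equiv.Perm (Fin (M+1+e))) (s s' : Fin (M+1+e)) :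
    PmN q (s:ℕ) < PmN q (s':ℕ) ↔ (s:ℕ) < (s':ℕ) := by
  have hs := s.isLt; have hs' := s'.isLt
  have := qv_le q (M+1)
  rw [PmN, PmN]
  split_ifs <;> omega

lemma PmN_inj (he : e ≤ 1) (q : Equiv.Perm (Fin (M+1+e))) (s s' : Fin (M+1+e))
    (h : PmN q (s:ℕ) = PmN q (s':ℕ)) : s = s' := by
  have h1 := PmN_lt_iff he q s s'
  have h2 := PmN_lt_iff he q s' s
  exact Fin.ext (by omega)

/-- positions below M carry big values -/
lemma phiN_big_low (q : Equiv.Perm (Fin (M+1+e))) (i : ℕ) (hi : i < M) :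
    M+2 ≤ phiN q i := by
  rw [phiN, if_pos hi]; omega

/-- classify positions with big value -/
lemma big_class (he : e ≤ 1) (q : Equiv.Perm (Fin (M+1+e))) (i : ℕ) (hi : i ≤ 2*M+e+2)
    (hb : M+2 ≤ phiN q i) :
    ∃ s : Fin (M+1+e), i = PmN q (s:ℕ) ∧ phiN q i = M+2+(q s : ℕ) := by
  rcases triN he q i hi with h | ⟨s, rfl⟩ | ⟨t, ht, rfl⟩
  · rw [h, phiN_a] at hb; omega
  · exact ⟨s, rfl, phiN_Pm he q s⟩
  · rw [phiN_Q q t _ rfl] at hb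
    exfalso
    rw [PmN] at hb
    split_ifs at hb <;> omega

/-- classify positions with small value -/
lemma small_class (he : e ≤ 1) (q : Equiv.Perm (Fin (M+1+e))) (i : ℕ) (hi : i ≤ 2*M+e+2)
    (hb : phiN q i ≤ M+1) :
    i = M ∨ ∃ t : Fin (M+1+e), (t:ℕ) ≤ M ∧ i = M+2+(q t : ℕ) ∧ phiN q i = PmN q (t:ℕ) := by
  rcases triN he q i hi with h | ⟨s, rfl⟩ | ⟨t, ht, rfl⟩
  · exact Or.inl h
  · rw [phiN_Pm he q s] at hb; omega
  · exact Or.inr ⟨t, ht, rfl, phiN_Q q t _ rfl⟩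

lemma PmN_val_le (q : Equiv.Perm (Fin (M+1+e))) (t : ℕ) (ht : t ≤ M) :
    PmN q t ≤ M+1 := by
  rw [PmN]; split_ifs <;> omega

end S19


namespace S19

variable {M e : ℕ}

def phiF (he : e ≤ 1) (q : Equiv.Perm (Fin (M+1+e))) (i : Fin (2*M+e+3)) : Fin (2*M+e+3) :=
  ⟨phiN q i, by have h := phiN_le q (i:ℕ) (by have := i.isLt; omega); omega⟩

lemma phiF_invol (he : e ≤ 1) (q : Equiv.Perm (Fin (M+1+e))) :
    Function.Involutive (phiF he q) := fun i =>
  Fin.ext (phiN_invol he q (i:ℕ) (by have := i.isLt; omega))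

def phi (he : e ≤ 1) (q : Equiv.Perm (Fin (M+1+e))) : Equiv.Perm (Fin (2*M+e+3)) :=
  (phiF_invol he q).toPerm

lemma phi_val (he : e ≤ 1) (q : Equiv.Perm (Fin (M+1+e))) (i : Fin (2*M+e+3)) :
    ((phi he q i) : ℕ) = phiN q (i:ℕ) := rfl

lemma phi_isInvol (he : e ≤ 1) (q : Equiv.Perm (Fin (M+1+e))) : IsInvolution (phi he q) :=
  fun i => (phiF_invol he q) i

lemma qlast (he : e ≤ 1) (q : Equiv.Perm (Fin (M+1+e))) (hM1 : M+1 < M+1+e)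
    (hq : Avoids132 q) (h0 : qv q (M+1) ≠ 0) : qv q M < qv q (M+1) := by
  have e1 : qv q M = (q (⟨M, by omega⟩ : Fin (M+1+e)) : ℕ) := qv_eq q ⟨M, by omega⟩
  have e2 : qv q (M+1) = (q (⟨M+1, hM1⟩ : Fin (M+1+e)) : ℕ) := qv_eq q ⟨M+1, hM1⟩
  by_contra hcon
  have hne : (q (⟨M, by omega⟩ : Fin (M+1+e)) : ℕ) ≠ (q (⟨M+1, hM1⟩ : Fin (M+1+e)) : ℕ) := by
    intro h
    have := q.injective (Fin.ext h)
    have := congrArg Fin.val this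
    simp at this
  have hlt : qv q (M+1) < qv q M := by omega
  set p := q.symm ⟨0, by omega⟩ with hp
  have hqp : (q p : ℕ) = 0 := by rw [hp, q.apply_symm_apply]
  have hpb : (p:ℕ) ≤ M+1 := by have := p.isLt; omega
  rcases Nat.lt_or_ge (p:ℕ) M with h1 | h1
  · exact hq ⟨p, ⟨M, by omega⟩, ⟨M+1, hM1⟩,
      Fin.lt_def.mpr (by simp; omega), Fin.lt_def.mpr (by simp),
      Fin.lt_def.mpr (by omega), Fin.lt_def.mpr (by omega)⟩
  · rcases Nat.eq_or_lt_of_le h1 with h2 | h2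
    · have : p = (⟨M, by omega⟩ : Fin (M+1+e)) := Fin.ext (by simp; omega)
      rw [this] at hqp
      omega
    · have : p = (⟨M+1, hM1⟩ : Fin (M+1+e)) := Fin.ext (by simp; omega)
      rw [this] at hqp
      omega

/-- the canonical 132 occurrence of `phi q`. -/
def cpos (he : e ≤ 1) (q : Equiv.Perm (Fin (M+1+e))) : Fin (2*M+e+3) :=
  ⟨M+2+qv q M, by have := qv_le q M; omega⟩

lemma phi_at_a (he : e ≤ 1) (q : Equiv.Perm (Fin (M+1+e))) :
    ((phi he q ⟨M, by omega⟩ : Fin (2*M+e+3)) : ℕ) = M := by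
  rw [phi_val]; exact phiN_a q

lemma phi_at_b (he : e ≤ 1) (q : Equiv.Perm (Fin (M+1+e))) :
    ((phi he q ⟨M+1, by omega⟩ : Fin (2*M+e+3)) : ℕ) = M+2+qv q M := by
  rw [phi_val]
  show phiN q (M+1) = _
  rw [phiN, if_neg (by omega), if_neg (by omega), if_pos rfl]

lemma phi_at_c (he : e ≤ 1) (q : Equiv.Perm (Fin (M+1+e))) :
    ((phi he q (cpos he q) : Fin (2*M+e+3)) : ℕ) = M+1 := by
  rw [phi_val]
  show phiN q (M+2+qv q M) = M+1
  have : phiN q (M+2+(q (⟨M, by omega⟩ : Fin (M+1+e)) : ℕ)) = PmN q ((⟨M, by omega⟩ : Fin (M+1+e)) : ℕ) :=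
    phiN_Q q ⟨M, by omega⟩ _ rfl
  rw [show M+2+qv q M = M+2+(q (⟨M, by omega⟩ : Fin (M+1+e)) : ℕ) from by
    rw [qv_eq q ⟨M, by omega⟩], this]
  show PmN q M = M+1
  rw [PmN, if_neg (by omega), if_pos rfl]

end S19

namespace S19

variable {M e : ℕ}

lemma PmN_cases (he : e ≤ 1) (q : Equiv.Perm (Fin (M+1+e))) (s : Fin (M+1+e)) :
    ((s:ℕ) < M ∧ PmN q (s:ℕ) = (s:ℕ)) ∨ ((s:ℕ) = M ∧ PmN q (s:ℕ) = M+1) ∨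
      ((s:ℕ) = M+1 ∧ M+1 < M+1+e ∧ PmN q (s:ℕ) = M+2+qv q (M+1)) := by
  have hs := s.isLt
  rw [PmN]
  split_ifs with g1 g2
  · exact Or.inl ⟨g1, rfl⟩
  · exact Or.inr (Or.inl ⟨g2, rfl⟩)
  · exact Or.inr (Or.inr ⟨by omega, by omega, rfl⟩)

lemma qv_at (q : Equiv.Perm (Fin (M+1+e))) (s : Fin (M+1+e)) (v : ℕ) (hv : (s:ℕ) = v) :
    qv q v = (q s : ℕ) := by rw [← hv]; exact qv_eq q s

set_option maxHeartbeats 1000000 in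
lemma phi_132unique (he : e ≤ 1) (q : Equiv.Perm (Fin (M+1+e))) (hq : Avoids132 q)
    (h0 : M+1 < M+1+e → qv q (M+1) ≠ 0)
    (i j k : Fin (2*M+e+3)) (hij : i < j) (hjk : j < k)
    (hv1 : phi he q i < phi he q k) (hv2 : phi he q k < phi he q j) :
    (i, j, k) = ((⟨M, by omega⟩ : Fin (2*M+e+3)), (⟨M+1, by omega⟩ : Fin (2*M+e+3)), cpos he q) := by
  have hiB : (i:ℕ) ≤ 2*M+e+2 := by have := i.isLt; omega
  have hjB : (j:ℕ) ≤ 2*M+e+2 := by have := j.isLt; omega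
  have hkB : (k:ℕ) ≤ 2*M+e+2 := by have := k.isLt; omega
  have pij : (i:ℕ) < (j:ℕ) := hij
  have pjk : (j:ℕ) < (k:ℕ) := hjk
  have v1 : phiN q (i:ℕ) < phiN q (k:ℕ) := hv1
  have v2 : phiN q (k:ℕ) < phiN q (j:ℕ) := hv2
  -- the unique large value of q when e = 1
  rcases Nat.lt_or_ge (phiN q (i:ℕ)) (M+2) with hIs | hIb
  case inr =>
    -- i big ⇒ all big
    obtain ⟨s1, hi1, hi2⟩ := big_class he q (i:ℕ) hiB hIb
    obtain ⟨s3, hk1, hk2⟩ := big_class he q (k:ℕ) hkB (by omega)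
    obtain ⟨s2, hj1, hj2⟩ := big_class he q (j:ℕ) hjB (by omega)
    exfalso
    apply hq ⟨s1, s2, s3, ?_, ?_, ?_, ?_⟩
    · exact Fin.lt_def.mpr (by rw [← PmN_lt_iff he q s1 s2, ← hi1, ← hj1]; exact pij)
    · exact Fin.lt_def.mpr (by rw [← PmN_lt_iff he q s2 s3, ← hj1, ← hk1]; exact pjk)
    · exact Fin.lt_def.mpr (by omega)
    · exact Fin.lt_def.mpr (by omega)
  case inl =>
  rcases Nat.lt_or_ge (phiN q (k:ℕ)) (M+2) with hKs | hKb
  case inr =>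
    -- k big, j big, i small
    obtain ⟨s3, hk1, hk2⟩ := big_class he q (k:ℕ) hkB hKb
    obtain ⟨s2, hj1, hj2⟩ := big_class he q (j:ℕ) hjB (by omega)
    have hs23 : (s2:ℕ) < (s3:ℕ) := by rw [← PmN_lt_iff he q s2 s3, ← hj1, ← hk1]; exact pjk
    exfalso
    rcases small_class he q (i:ℕ) hiB (by omega) with hia | ⟨t1, ht1, hit, hiv⟩
    · -- i = a
      rcases PmN_cases he q s2 with ⟨g1, g2⟩ | ⟨g1, g2⟩ | ⟨g1, hM1, g2⟩
      · omega
      · -- s2 = M, s3 = M+1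
        have hs3v : (s3:ℕ) = M+1 := by have := s3.isLt; omega
        have hM1 : M+1 < M+1+e := by have := s3.isLt; omega
        have e2 : qv q (M+1) = (q s3 : ℕ) := qv_at q s3 _ hs3v
        have e1 : qv q M = (q s2 : ℕ) := qv_at q s2 _ g1
        have := qlast he q hM1 hq (h0 hM1)
        omega
      · -- s2 = M+1 : s3 > M+1 impossible
        have := s3.isLt; omega
    · -- i = Qm t1 : i ≥ M+2, so s2 = M+1, but then s3 > M+1 impossible
      rcases PmN_cases he q s2 with ⟨g1, g2⟩ | ⟨g1, g2⟩ | ⟨g1, hM1, g2⟩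
      · omega
      · omega
      · have := s3.isLt; omega
  case inl =>
  rcases Nat.lt_or_ge (phiN q (j:ℕ)) (M+2) with hJs | hJb
  case inr =>
    -- j big, i k small
    obtain ⟨s2, hj1, hj2⟩ := big_class he q (j:ℕ) hjB hJb
    rcases small_class he q (k:ℕ) hkB (by omega) with hka | ⟨t3, ht3, hkt, hkv⟩
    · -- k = a : j < k = M so j position < M : big-low contra with i
      exfalso
      rcases PmN_cases he q s2 with ⟨g1, g2⟩ | ⟨g1, g2⟩ | ⟨g1, hM1, g2⟩
      · have : (i:ℕ) < M := by omega
        have := phiN_big_low q (i:ℕ) this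
        omega
      · omega
      · have := qv_le q (M+1); omega
    · -- k = Qm t3
      rcases small_class he q (i:ℕ) hiB (by omega) with hia | ⟨t1, ht1, hit, hiv⟩
      · -- i = a
        have hpa : phiN q (i:ℕ) = M := by rw [hia]; exact phiN_a q
        -- phiN k = PmN t3 > M ⇒ t3 = M
        have ht3M : (t3:ℕ) = M := by
          rcases PmN_cases he q t3 with ⟨g1, g2⟩ | ⟨g1, g2⟩ | ⟨g1, hM1, g2⟩
          · omega
          · omega
          · omega
        rcases PmN_cases he q s2 with ⟨g1, g2⟩ | ⟨g1, g2⟩ | ⟨g1, hM1, g2⟩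
        · omega
        · -- s2 = M : THE triple
          have e3 : qv q M = (q t3 : ℕ) := qv_at q t3 _ ht3M
          refine Prod.ext (Fin.ext ?_) (Prod.ext (Fin.ext ?_) (Fin.ext ?_))
          · exact hia
          · show (j:ℕ) = M+1
            omega
          · show (k:ℕ) = M+2+qv q M
            omega
        · -- s2 = M+1 : j = f, k = cpos, j < k gives qv (M+1) < qv M : qlast contra
          exfalso
          have e3 : qv q M = (q t3 : ℕ) := qv_at q t3 _ ht3M
          have := qlast he q hM1 hq (h0 hM1)
          omega
      · -- i = Qm t1
        exfalso
        rcases PmN_cases he q s2 with ⟨g1, g2⟩ | ⟨g1, g2⟩ | ⟨g1, hM1, g2⟩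
        · omega
        · omega
        · -- s2 = M+1, j = f
          have e2 : qv q (M+1) = (q s2 : ℕ) := qv_at q s2 _ g1
          -- positions: q t1 < q s2 < q t3 ; values : PmN t1 < PmN t3 ⇒ t1 < t3
          have htt : (t1:ℕ) < (t3:ℕ) := by rw [← PmN_lt_iff he q t1 t3]; omega
          apply hq ⟨t1, t3, s2, Fin.lt_def.mpr (by omega), Fin.lt_def.mpr (by omega),
            Fin.lt_def.mpr (by omega), Fin.lt_def.mpr (by omega)⟩
  case inl =>
    -- all small
    exfalso
    rcases small_class he q (k:ℕ) hkB (by omega) with hka | ⟨t3, ht3, hkt, hkv⟩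
    · have : (j:ℕ) < M := by omega
      have := phiN_big_low q (j:ℕ) this
      omega
    · rcases small_class he q (j:ℕ) hjB (by omega) with hja | ⟨t2, ht2, hjt, hjv⟩
      · have : (i:ℕ) < M := by omega
        have := phiN_big_low q (i:ℕ) this
        omega
      · rcases small_class he q (i:ℕ) hiB (by omega) with hia | ⟨t1, ht1, hit, hiv⟩
        · -- i = a : M < PmN t3 < PmN t2 ≤ M+1 impossible
          have hpa : phiN q (i:ℕ) = M := by rw [hia]; exact phiN_a q
          have b3 := PmN_val_le q (t3:ℕ) ht3
          have b2 := PmN_val_le q (t2:ℕ) ht2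
          omega
        · -- i,j,k all Qm : q has 132 at (t1, t3, t2)
          have h13 : (t1:ℕ) < (t3:ℕ) := by rw [← PmN_lt_iff he q t1 t3]; omega
          have h32 : (t3:ℕ) < (t2:ℕ) := by rw [← PmN_lt_iff he q t3 t2]; omega
          apply hq ⟨t1, t3, t2, Fin.lt_def.mpr h13, Fin.lt_def.mpr h32,
            Fin.lt_def.mpr (by omega), Fin.lt_def.mpr (by omega)⟩

end S19

namespace S19

variable {M e : ℕ}

set_option maxHeartbeats 1000000 in
lemma phi_1234 (he : e ≤ 1) (q : Equiv.Perm (Fin (M+1+e))) (hq : Avoids1234 q) :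
    Avoids1234 (phi he q) := by
  rintro ⟨i, j, k, l, hij, hjk, hkl, hv1, hv2, hv3⟩
  have hiB : (i:ℕ) ≤ 2*M+e+2 := by have := i.isLt; omega
  have hjB : (j:ℕ) ≤ 2*M+e+2 := by have := j.isLt; omega
  have hkB : (k:ℕ) ≤ 2*M+e+2 := by have := k.isLt; omega
  have hlB : (l:ℕ) ≤ 2*M+e+2 := by have := l.isLt; omega
  have pij : (i:ℕ) < (j:ℕ) := hij
  have pjk : (j:ℕ) < (k:ℕ) := hjk
  have pkl : (k:ℕ) < (l:ℕ) := hkl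
  have v1 : phiN q (i:ℕ) < phiN q (j:ℕ) := hv1
  have v2 : phiN q (j:ℕ) < phiN q (k:ℕ) := hv2
  have v3 : phiN q (k:ℕ) < phiN q (l:ℕ) := hv3
  rcases Nat.lt_or_ge (phiN q (i:ℕ)) (M+2) with hIs | hIb
  case inr =>
    obtain ⟨s1, hi1, hi2⟩ := big_class he q (i:ℕ) hiB hIb
    obtain ⟨s2, hj1, hj2⟩ := big_class he q (j:ℕ) hjB (by omega)
    obtain ⟨s3, hk1, hk2⟩ := big_class he q (k:ℕ) hkB (by omega)
    obtain ⟨s4, hl1, hl2⟩ := big_class he q (l:ℕ) hlB (by omega)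
    exact hq ⟨s1, s2, s3, s4,
      Fin.lt_def.mpr (by rw [← PmN_lt_iff he q s1 s2, ← hi1, ← hj1]; exact pij),
      Fin.lt_def.mpr (by rw [← PmN_lt_iff he q s2 s3, ← hj1, ← hk1]; exact pjk),
      Fin.lt_def.mpr (by rw [← PmN_lt_iff he q s3 s4, ← hk1, ← hl1]; exact pkl),
      Fin.lt_def.mpr (by omega), Fin.lt_def.mpr (by omega), Fin.lt_def.mpr (by omega)⟩
  case inl =>
  rcases Nat.lt_or_ge (phiN q (j:ℕ)) (M+2) with hJs | hJb
  case inr =>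
    obtain ⟨s2, hj1, hj2⟩ := big_class he q (j:ℕ) hjB hJb
    obtain ⟨s3, hk1, hk2⟩ := big_class he q (k:ℕ) hkB (by omega)
    obtain ⟨s4, hl1, hl2⟩ := big_class he q (l:ℕ) hlB (by omega)
    have hs23 : (s2:ℕ) < (s3:ℕ) := by rw [← PmN_lt_iff he q s2 s3, ← hj1, ← hk1]; exact pjk
    have hs34 : (s3:ℕ) < (s4:ℕ) := by rw [← PmN_lt_iff he q s3 s4, ← hk1, ← hl1]; exact pkl
    have hb4 := s4.isLt
    rcases small_class he q (i:ℕ) hiB (by omega) with hia | ⟨t1, ht1, hit, hiv⟩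
    · rcases PmN_cases he q s2 with ⟨g1, g2⟩ | ⟨g1, g2⟩ | ⟨g1, hM1, g2⟩ <;> omega
    · rcases PmN_cases he q s2 with ⟨g1, g2⟩ | ⟨g1, g2⟩ | ⟨g1, hM1, g2⟩ <;> omega
  case inl =>
  rcases Nat.lt_or_ge (phiN q (k:ℕ)) (M+2) with hKs | hKb
  case inr =>
    obtain ⟨s3, hk1, hk2⟩ := big_class he q (k:ℕ) hkB hKb
    obtain ⟨s4, hl1, hl2⟩ := big_class he q (l:ℕ) hlB (by omega)
    have hs34 : (s3:ℕ) < (s4:ℕ) := by rw [← PmN_lt_iff he q s3 s4, ← hk1, ← hl1]; exact pkl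
    have hb4 := s4.isLt
    rcases small_class he q (j:ℕ) hjB (by omega) with hja | ⟨t2, ht2, hjt, hjv⟩
    · have := phiN_big_low q (i:ℕ) (by omega); omega
    · rcases PmN_cases he q s3 with ⟨g1, g2⟩ | ⟨g1, g2⟩ | ⟨g1, hM1, g2⟩ <;> omega
  case inl =>
  rcases Nat.lt_or_ge (phiN q (l:ℕ)) (M+2) with hLs | hLb
  case inr =>
    -- only l big
    obtain ⟨s4, hl1, hl2⟩ := big_class he q (l:ℕ) hlB hLb
    rcases small_class he q (k:ℕ) hkB (by omega) with hka | ⟨t3, ht3, hkt, hkv⟩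
    · have := phiN_big_low q (j:ℕ) (by omega); omega
    rcases small_class he q (j:ℕ) hjB (by omega) with hja | ⟨t2, ht2, hjt, hjv⟩
    · have := phiN_big_low q (i:ℕ) (by omega); omega
    rcases PmN_cases he q s4 with ⟨g1, g2⟩ | ⟨g1, g2⟩ | ⟨g1, hM1, g2⟩
    · omega
    · omega
    · -- l = f position, k j Qm, i small
      have e2 : qv q (M+1) = (q s4 : ℕ) := qv_at q s4 _ g1
      rcases small_class he q (i:ℕ) hiB (by omega) with hia | ⟨t1, ht1, hit, hiv⟩
      · have hpa : phiN q (i:ℕ) = M := by rw [hia]; exact phiN_a q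
        have b2 := PmN_val_le q (t2:ℕ) ht2
        have b3 := PmN_val_le q (t3:ℕ) ht3
        have h23 : (t2:ℕ) < (t3:ℕ) := by rw [← PmN_lt_iff he q t2 t3]; omega
        -- phiN i = M < PmN t2 < PmN t3 ≤ M+1 : impossible
        omega
      · have h12 : (t1:ℕ) < (t2:ℕ) := by rw [← PmN_lt_iff he q t1 t2]; omega
        have h23 : (t2:ℕ) < (t3:ℕ) := by rw [← PmN_lt_iff he q t2 t3]; omega
        exact hq ⟨t1, t2, t3, s4, Fin.lt_def.mpr h12, Fin.lt_def.mpr h23,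
          Fin.lt_def.mpr (by omega), Fin.lt_def.mpr (by omega), Fin.lt_def.mpr (by omega),
          Fin.lt_def.mpr (by omega)⟩
  case inl =>
    -- all small
    rcases small_class he q (l:ℕ) hlB (by omega) with hla | ⟨t4, ht4, hlt, hlv⟩
    · have := phiN_big_low q (k:ℕ) (by omega); omega
    rcases small_class he q (k:ℕ) hkB (by omega) with hka | ⟨t3, ht3, hkt, hkv⟩
    · have := phiN_big_low q (j:ℕ) (by omega); omega
    rcases small_class he q (j:ℕ) hjB (by omega) with hja | ⟨t2, ht2, hjt, hjv⟩
    · have := phiN_big_low q (i:ℕ) (by omega); omega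
    rcases small_class he q (i:ℕ) hiB (by omega) with hia | ⟨t1, ht1, hit, hiv⟩
    · have hpa : phiN q (i:ℕ) = M := by rw [hia]; exact phiN_a q
      have b2 := PmN_val_le q (t2:ℕ) ht2
      have b3 := PmN_val_le q (t3:ℕ) ht3
      have h23 : (t2:ℕ) < (t3:ℕ) := by rw [← PmN_lt_iff he q t2 t3]; omega
      omega
    · have h12 : (t1:ℕ) < (t2:ℕ) := by rw [← PmN_lt_iff he q t1 t2]; omega
      have h23 : (t2:ℕ) < (t3:ℕ) := by rw [← PmN_lt_iff he q t2 t3]; omega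
      have h34 : (t3:ℕ) < (t4:ℕ) := by rw [← PmN_lt_iff he q t3 t4]; omega
      exact hq ⟨t1, t2, t3, t4, Fin.lt_def.mpr h12, Fin.lt_def.mpr h23, Fin.lt_def.mpr h34,
        Fin.lt_def.mpr (by omega), Fin.lt_def.mpr (by omega), Fin.lt_def.mpr (by omega)⟩

set_option maxHeartbeats 1000000 in
lemma phi_123 (he : e ≤ 1) (he0 : e = 0) (q : Equiv.Perm (Fin (M+1+e)))
    (hq : Avoids123 q) : Avoids123 (phi he q) := by
  rintro ⟨i, j, k, hij, hjk, hv1, hv2⟩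
  have hiB : (i:ℕ) ≤ 2*M+e+2 := by have := i.isLt; omega
  have hjB : (j:ℕ) ≤ 2*M+e+2 := by have := j.isLt; omega
  have hkB : (k:ℕ) ≤ 2*M+e+2 := by have := k.isLt; omega
  have pij : (i:ℕ) < (j:ℕ) := hij
  have pjk : (j:ℕ) < (k:ℕ) := hjk
  have v1 : phiN q (i:ℕ) < phiN q (j:ℕ) := hv1
  have v2 : phiN q (j:ℕ) < phiN q (k:ℕ) := hv2
  rcases Nat.lt_or_ge (phiN q (i:ℕ)) (M+2) with hIs | hIb
  case inr =>
    obtain ⟨s1, hi1, hi2⟩ := big_class he q (i:ℕ) hiB hIb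
    obtain ⟨s2, hj1, hj2⟩ := big_class he q (j:ℕ) hjB (by omega)
    obtain ⟨s3, hk1, hk2⟩ := big_class he q (k:ℕ) hkB (by omega)
    exact hq ⟨s1, s2, s3,
      Fin.lt_def.mpr (by rw [← PmN_lt_iff he q s1 s2, ← hi1, ← hj1]; exact pij),
      Fin.lt_def.mpr (by rw [← PmN_lt_iff he q s2 s3, ← hj1, ← hk1]; exact pjk),
      Fin.lt_def.mpr (by omega), Fin.lt_def.mpr (by omega)⟩
  case inl =>
  rcases Nat.lt_or_ge (phiN q (j:ℕ)) (M+2) with hJs | hJb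
  case inr =>
    obtain ⟨s2, hj1, hj2⟩ := big_class he q (j:ℕ) hjB hJb
    obtain ⟨s3, hk1, hk2⟩ := big_class he q (k:ℕ) hkB (by omega)
    have hs23 : (s2:ℕ) < (s3:ℕ) := by rw [← PmN_lt_iff he q s2 s3, ← hj1, ← hk1]; exact pjk
    have hb3 := s3.isLt
    rcases small_class he q (i:ℕ) hiB (by omega) with hia | ⟨t1, ht1, hit, hiv⟩
    · rcases PmN_cases he q s2 with ⟨g1, g2⟩ | ⟨g1, g2⟩ | ⟨g1, hM1, g2⟩ <;> omega
    · rcases PmN_cases he q s2 with ⟨g1, g2⟩ | ⟨g1, g2⟩ | ⟨g1, hM1, g2⟩ <;> omega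
  case inl =>
  rcases Nat.lt_or_ge (phiN q (k:ℕ)) (M+2) with hKs | hKb
  case inr =>
    obtain ⟨s3, hk1, hk2⟩ := big_class he q (k:ℕ) hkB hKb
    rcases small_class he q (j:ℕ) hjB (by omega) with hja | ⟨t2, ht2, hjt, hjv⟩
    · have := phiN_big_low q (i:ℕ) (by omega); omega
    · rcases PmN_cases he q s3 with ⟨g1, g2⟩ | ⟨g1, g2⟩ | ⟨g1, hM1, g2⟩ <;> omega
  case inl =>
    rcases small_class he q (k:ℕ) hkB (by omega) with hka | ⟨t3, ht3, hkt, hkv⟩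
    · have := phiN_big_low q (j:ℕ) (by omega); omega
    rcases small_class he q (j:ℕ) hjB (by omega) with hja | ⟨t2, ht2, hjt, hjv⟩
    · have := phiN_big_low q (i:ℕ) (by omega); omega
    rcases small_class he q (i:ℕ) hiB (by omega) with hia | ⟨t1, ht1, hit, hiv⟩
    · have hpa : phiN q (i:ℕ) = M := by rw [hia]; exact phiN_a q
      have b2 := PmN_val_le q (t2:ℕ) ht2
      have b3 := PmN_val_le q (t3:ℕ) ht3
      have h23 : (t2:ℕ) < (t3:ℕ) := by rw [← PmN_lt_iff he q t2 t3]; omega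
      omega
    · have h12 : (t1:ℕ) < (t2:ℕ) := by rw [← PmN_lt_iff he q t1 t2]; omega
      have h23 : (t2:ℕ) < (t3:ℕ) := by rw [← PmN_lt_iff he q t2 t3]; omega
      exact hq ⟨t1, t2, t3, Fin.lt_def.mpr h12, Fin.lt_def.mpr h23,
        Fin.lt_def.mpr (by omega), Fin.lt_def.mpr (by omega)⟩

end S19

namespace S19

variable {M e : ℕ}

def occSet {n : ℕ} (π : Equiv.Perm (Fin n)) : Finset (Fin n × Fin n × Fin n) :=
  Finset.univ.filter fun t : Fin n × Fin n × Fin n =>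
    t.1 < t.2.1 ∧ t.2.1 < t.2.2 ∧ π t.1 < π t.2.2 ∧ π t.2.2 < π t.2.1

lemma contains132Once_iff {n : ℕ} (π : Equiv.Perm (Fin n)) :
    Contains132Once π ↔ (occSet π).card = 1 := Iff.rfl

def T0 (he : e ≤ 1) (q : Equiv.Perm (Fin (M+1+e))) :
    Fin (2*M+e+3) × Fin (2*M+e+3) × Fin (2*M+e+3) :=
  (⟨M, by omega⟩, ⟨M+1, by omega⟩, cpos he q)

lemma T0_mem (he : e ≤ 1) (q : Equiv.Perm (Fin (M+1+e))) :
    T0 he q ∈ occSet (phi he q) := by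
  rw [occSet, Finset.mem_filter]
  refine ⟨Finset.mem_univ _, Fin.lt_def.mpr (show M < M+1 by omega),
    Fin.lt_def.mpr (show M+1 < M+2+qv q M by omega),
    Fin.lt_def.mpr ?_, Fin.lt_def.mpr ?_⟩
  · rw [show ((phi he q (T0 he q).1 : Fin (2*M+e+3)) : ℕ) = M from phi_at_a he q,
      show ((phi he q (T0 he q).2.2 : Fin (2*M+e+3)) : ℕ) = M+1 from phi_at_c he q]
    omega
  · rw [show ((phi he q (T0 he q).2.2 : Fin (2*M+e+3)) : ℕ) = M+1 from phi_at_c he q,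
      show ((phi he q (T0 he q).2.1 : Fin (2*M+e+3)) : ℕ) = M+2+qv q M from phi_at_b he q]
    omega

lemma phi_132once (he : e ≤ 1) (q : Equiv.Perm (Fin (M+1+e))) (hq : Avoids132 q)
    (h0 : M+1 < M+1+e → qv q (M+1) ≠ 0) : Contains132Once (phi he q) := by
  rw [contains132Once_iff, Finset.card_eq_one]
  refine ⟨T0 he q, ?_⟩
  rw [Finset.eq_singleton_iff_unique_mem]
  refine ⟨T0_mem he q, ?_⟩
  intro t ht
  rw [occSet, Finset.mem_filter] at ht
  obtain ⟨-, h1, h2, h3, h4⟩ := ht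
  exact phi_132unique he q hq h0 t.1 t.2.1 t.2.2 h1 h2 h3 h4

/-- Pm as a Fin-valued map -/
def PmF (he : e ≤ 1) (q : Equiv.Perm (Fin (M+1+e))) (s : Fin (M+1+e)) : Fin (2*M+e+3) :=
  ⟨PmN q (s:ℕ), by
    have := PmN_le q (s:ℕ) (by have := s.isLt; omega); omega⟩

lemma phi_PmF_val (he : e ≤ 1) (q : Equiv.Perm (Fin (M+1+e))) (s : Fin (M+1+e)) :
    ((phi he q (PmF he q s) : Fin (2*M+e+3)) : ℕ) = M+2+(q s : ℕ) := by
  rw [phi_val]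
  exact phiN_Pm he q s

lemma PmN_ne_M (he : e ≤ 1) (q : Equiv.Perm (Fin (M+1+e))) (s : Fin (M+1+e)) :
    PmN q (s:ℕ) ≠ M := by
  have := qv_le q (M+1)
  rcases PmN_cases he q s with ⟨g1, g2⟩ | ⟨g1, g2⟩ | ⟨g1, _, g2⟩ <;> omega

lemma pull132 (he : e ≤ 1) (q : Equiv.Perm (Fin (M+1+e))) (h : ¬ Avoids132 q) :
    ¬ Contains132Once (phi he q) := by
  obtain ⟨x, y, z, hxy, hyz, hv, hv'⟩ := not_not.mp h
  intro honce
  rw [contains132Once_iff, Finset.card_eq_one] at honce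
  obtain ⟨a, ha⟩ := honce
  have m1 := T0_mem he q
  have m2 : (PmF he q x, PmF he q y, PmF he q z) ∈ occSet (phi he q) := by
    rw [occSet, Finset.mem_filter]
    refine ⟨Finset.mem_univ _, ?_, ?_, ?_, ?_⟩
    · exact Fin.lt_def.mpr ((PmN_lt_iff he q x y).mpr (Fin.lt_def.mp hxy))
    · exact Fin.lt_def.mpr ((PmN_lt_iff he q y z).mpr (Fin.lt_def.mp hyz))
    · refine Fin.lt_def.mpr ?_
      rw [show ((phi he q (PmF he q x) : Fin (2*M+e+3)) : ℕ) = M+2+(q x : ℕ) from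
        phi_PmF_val he q x,
        show ((phi he q (PmF he q z) : Fin (2*M+e+3)) : ℕ) = M+2+(q z : ℕ) from
        phi_PmF_val he q z]
      have := Fin.lt_def.mp hv; omega
    · refine Fin.lt_def.mpr ?_
      rw [show ((phi he q (PmF he q z) : Fin (2*M+e+3)) : ℕ) = M+2+(q z : ℕ) from
        phi_PmF_val he q z,
        show ((phi he q (PmF he q y) : Fin (2*M+e+3)) : ℕ) = M+2+(q y : ℕ) from
        phi_PmF_val he q y]
      have := Fin.lt_def.mp hv'; omega
  rw [ha, Finset.mem_singleton] at m1 m2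
  have : (T0 he q).1 = (PmF he q x) := by rw [m1, ← m2]
  have hval := congrArg Fin.val this
  exact PmN_ne_M he q x (by
    rw [show ((T0 he q).1 : ℕ) = M from rfl] at hval
    exact hval.symm)

lemma pull1234 (he : e ≤ 1) (q : Equiv.Perm (Fin (M+1+e)))
    (hphi : Avoids1234 (phi he q)) : Avoids1234 q := by
  rintro ⟨x, y, z, w, hxy, hyz, hzw, hv1, hv2, hv3⟩
  refine hphi ⟨PmF he q x, PmF he q y, PmF he q z, PmF he q w,
    Fin.lt_def.mpr ((PmN_lt_iff he q x y).mpr (Fin.lt_def.mp hxy)),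
    Fin.lt_def.mpr ((PmN_lt_iff he q y z).mpr (Fin.lt_def.mp hyz)),
    Fin.lt_def.mpr ((PmN_lt_iff he q z w).mpr (Fin.lt_def.mp hzw)), ?_, ?_, ?_⟩ <;>
  · refine Fin.lt_def.mpr ?_
    simp only [phi_PmF_val he q]
    have := Fin.lt_def.mp hv1; have := Fin.lt_def.mp hv2; have := Fin.lt_def.mp hv3
    omega

lemma pull123 (he : e ≤ 1) (q : Equiv.Perm (Fin (M+1+e)))
    (hphi : Avoids123 (phi he q)) : Avoids123 q := by
  rintro ⟨x, y, z, hxy, hyz, hv1, hv2⟩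
  refine hphi ⟨PmF he q x, PmF he q y, PmF he q z,
    Fin.lt_def.mpr ((PmN_lt_iff he q x y).mpr (Fin.lt_def.mp hxy)),
    Fin.lt_def.mpr ((PmN_lt_iff he q y z).mpr (Fin.lt_def.mp hyz)), ?_, ?_⟩ <;>
  · refine Fin.lt_def.mpr ?_
    simp only [phi_PmF_val he q]
    have := Fin.lt_def.mp hv1; have := Fin.lt_def.mp hv2
    omega

lemma pull_qlast (he : e ≤ 1) (q : Equiv.Perm (Fin (M+1+e))) (hM1 : M+1 < M+1+e)
    (hz : qv q (M+1) = 0) : ¬ Contains132Once (phi he q) := by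
  intro honce
  rw [contains132Once_iff, Finset.card_eq_one] at honce
  obtain ⟨a, ha⟩ := honce
  have m1 := T0_mem he q
  have hqM : 0 < qv q M := by
    rcases Nat.eq_zero_or_pos (qv q M) with h | h
    · exfalso
      have := qv_inj q ⟨M, by omega⟩ ⟨M+1, hM1⟩ (by
        rw [show ((⟨M, by omega⟩ : Fin (M+1+e)) : ℕ) = M from rfl,
          show ((⟨M+1, hM1⟩ : Fin (M+1+e)) : ℕ) = M+1 from rfl, h, hz])
      have := congrArg Fin.val this
      simp at this
    · exact h
  have hfval : phiN q (M+2+qv q (M+1)) = M+2+qv q (M+1) := by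
    have h1 : M+2+qv q (M+1) = M+2+(q ⟨M+1, hM1⟩ : ℕ) := by
      rw [qv_at q ⟨M+1, hM1⟩ (M+1) rfl]
    rw [h1, phiN_Q q ⟨M+1, hM1⟩ _ rfl]
    show PmN q (M+1) = _
    rw [PmN, if_neg (by omega), if_neg (by omega)]
    omega
  have m2 : ((⟨M, by omega⟩ : Fin (2*M+e+3)), (⟨M+2+qv q (M+1), by have := qv_le q (M+1); omega⟩ : Fin (2*M+e+3)), cpos he q) ∈ occSet (phi he q) := by
    rw [occSet, Finset.mem_filter]
    refine ⟨Finset.mem_univ _, Fin.lt_def.mpr (show M < M+2+qv q (M+1) by omega),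
      Fin.lt_def.mpr (show M+2+qv q (M+1) < M+2+qv q M by omega),
      Fin.lt_def.mpr ?_, Fin.lt_def.mpr ?_⟩
    · rw [show ((phi he q (⟨M, by omega⟩ : Fin (2*M+e+3)) : Fin (2*M+e+3)) : ℕ) = M from
        phi_at_a he q,
        show ((phi he q (cpos he q) : Fin (2*M+e+3)) : ℕ) = M+1 from phi_at_c he q]
      omega
    · rw [show ((phi he q (cpos he q) : Fin (2*M+e+3)) : ℕ) = M+1 from phi_at_c he q,
        phi_val]
      rw [hfval]
      omega
  rw [ha, Finset.mem_singleton] at m1 m2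
  have : (T0 he q).2.1 = (⟨M+2+qv q (M+1), by have := qv_le q (M+1); omega⟩ : Fin (2*M+e+3)) := by
    rw [m1, ← m2]
  have hval : M+1 = M+2+qv q (M+1) := congrArg Fin.val this
  omega

lemma phi_not123 (he : e ≤ 1) (q : Equiv.Perm (Fin (M+1+e))) (hM1 : M+1 < M+1+e)
    (hq132 : Avoids132 q) (h0 : qv q (M+1) ≠ 0) : ¬ Avoids123 (phi he q) := by
  intro hav
  have hlast := qlast he q hM1 hq132 h0
  have hfval : phiN q (M+2+qv q (M+1)) = M+2+qv q (M+1) := by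
    have h1 : M+2+qv q (M+1) = M+2+(q ⟨M+1, hM1⟩ : ℕ) := by
      rw [qv_at q ⟨M+1, hM1⟩ (M+1) rfl]
    rw [h1, phiN_Q q ⟨M+1, hM1⟩ _ rfl]
    show PmN q (M+1) = _
    rw [PmN, if_neg (by omega), if_neg (by omega)]
    exact h1
  refine hav ⟨⟨M, by omega⟩, ⟨M+1, by omega⟩,
    ⟨M+2+qv q (M+1), by have := qv_le q (M+1); omega⟩,
    Fin.lt_def.mpr (show M < M+1 by omega),
    Fin.lt_def.mpr (show M+1 < M+2+qv q (M+1) by omega), ?_, ?_⟩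
  · refine Fin.lt_def.mpr ?_
    rw [show ((phi he q (⟨M, by omega⟩ : Fin (2*M+e+3)) : Fin (2*M+e+3)) : ℕ) = M from
      phi_at_a he q,
      show ((phi he q (⟨M+1, by omega⟩ : Fin (2*M+e+3)) : Fin (2*M+e+3)) : ℕ) = M+2+qv q M from
      phi_at_b he q]
    omega
  · refine Fin.lt_def.mpr ?_
    rw [show ((phi he q (⟨M+1, by omega⟩ : Fin (2*M+e+3)) : Fin (2*M+e+3)) : ℕ) = M+2+qv q M from
      phi_at_b he q, phi_val]
    rw [hfval]
    omega

end S19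

namespace S19

lemma once_unpack {n : ℕ} (π : Equiv.Perm (Fin n)) (h : Contains132Once π) :
    ∃ a b c : Fin n, (a, b, c) ∈ occSet π ∧ ∀ t ∈ occSet π, t = (a, b, c) := by
  rw [contains132Once_iff, Finset.card_eq_one] at h
  obtain ⟨t, ht⟩ := h
  refine ⟨t.1, t.2.1, t.2.2, ?_, ?_⟩
  · rw [ht]; exact Finset.mem_singleton_self t
  · intro t' ht'
    rw [ht, Finset.mem_singleton] at ht'
    exact ht'

lemma not_occ {n : ℕ} (π : Equiv.Perm (Fin n)) (a b c : Fin n)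
    (hu : ∀ t ∈ occSet π, t = (a, b, c)) (x y z : Fin n)
    (hne : ¬ (x = a ∧ y = b ∧ z = c)) :
    ¬(x < y ∧ y < z ∧ π x < π z ∧ π z < π y) := by
  intro hc
  have := hu (x, y, z) (by rw [occSet, Finset.mem_filter]; exact ⟨Finset.mem_univ _, hc⟩)
  rw [Prod.mk.injEq, Prod.mk.injEq] at this
  exact hne ⟨this.1, this.2.1, this.2.2⟩

section Structure

variable {n : ℕ} (π : Equiv.Perm (Fin n)) (a b c : Fin n)

lemma L1 (hinv : IsInvolution π) (hm : (a, b, c) ∈ occSet π)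
    (hu : ∀ t ∈ occSet π, t = (a, b, c)) :
    π a = a ∧ π b = c ∧ π c = b := by
  obtain ⟨-, hab, hbc, hv1, hv2⟩ := Finset.mem_filter.mp hm
  have hm2 : (π a, π c, π b) ∈ occSet π := by
    rw [occSet, Finset.mem_filter]
    refine ⟨Finset.mem_univ _, hv1, hv2, ?_, ?_⟩
    · rw [hinv a, hinv b]; exact hab
    · rw [hinv b, hinv c]; exact hbc
  have h := hu _ hm2
  rw [Prod.mk.injEq, Prod.mk.injEq] at h
  exact ⟨h.1, h.2.2, h.2.1⟩

lemma occ_facts (hm : (a, b, c) ∈ occSet π) :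
    a < b ∧ b < c ∧ π a < π c ∧ π c < π b := by
  obtain ⟨-, h1, h2, h3, h4⟩ := Finset.mem_filter.mp hm
  exact ⟨h1, h2, h3, h4⟩

end Structure

end S19

namespace S19

def PmPos (M e : ℕ) (f : Fin (2*M+e+3)) (s : Fin (M+1+e)) : Fin (2*M+e+3) :=
  if (s:ℕ) < M then ⟨(s:ℕ), by have := s.isLt; omega⟩
  else if (s:ℕ) = M then ⟨M+1, by omega⟩ else f

lemma PmPos_val (M e : ℕ) (f : Fin (2*M+e+3)) (s : Fin (M+1+e)) :
    ((PmPos M e f s) : ℕ) = if (s:ℕ) < M then (s:ℕ) else if (s:ℕ) = M then M+1 else (f:ℕ) := by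
  rw [PmPos]; split_ifs <;> rfl

set_option maxHeartbeats 4000000 in
lemma phi_surj (M e : ℕ) (he : e ≤ 1) (π : Equiv.Perm (Fin (2*M+e+3)))
    (hinv : IsInvolution π) (h1234 : Avoids1234 π) (honce : Contains132Once π) :
    ∃ q : Equiv.Perm (Fin (M+1+e)), phi he q = π := by
  obtain ⟨a, b, c, hm, hu⟩ := once_unpack π honce
  obtain ⟨hfa, hbc, hcb⟩ := L1 π a b c hinv hm hu
  obtain ⟨hab, hbc', hv1, hv2⟩ := occ_facts π a b c hm
  have hab' : (a:ℕ) < b := hab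
  have hbc'' : (b:ℕ) < c := hbc'
  have hπcv : (π c : ℕ) = (b:ℕ) := congrArg Fin.val hcb
  have hπbv : (π b : ℕ) = (c:ℕ) := congrArg Fin.val hbc
  have hπav : (π a : ℕ) = (a:ℕ) := congrArg Fin.val hfa
  -- L2 : b = a+1
  have hL2 : (b:ℕ) = (a:ℕ)+1 := by
    by_contra hne
    obtain ⟨x, hx⟩ : ∃ x : Fin (2*M+e+3), (x:ℕ) = (a:ℕ)+1 :=
      ⟨⟨(a:ℕ)+1, by have := b.isLt; omega⟩, rfl⟩
    have hxc : x ≠ c := fun h => by rw [h] at hx; omega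
    have s1 : ¬ (π c < π x) := fun h4 =>
      not_occ π a b c hu a x c (fun hcc => hne (by rw [← hcc.2.1, hx]))
        ⟨Fin.lt_def.mpr (by omega), Fin.lt_def.mpr (by omega), hv1, h4⟩
    have hπx_lt_b : (π x : ℕ) < (b:ℕ) := by
      have hn1 : ¬ ((π c : ℕ) < (π x : ℕ)) := fun h => s1 (Fin.lt_def.mpr h)
      have hn2 : (π x : ℕ) ≠ (π c : ℕ) := fun h => hxc (π.injective (Fin.ext h))
      omega
    have s2 : ¬ (π x < π c) := fun h3 =>
      not_occ π a b c hu x b c (fun hcc => by rw [hcc.1] at hx; omega)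
        ⟨Fin.lt_def.mpr (by omega), hbc', h3, hv2⟩
    exact s2 (Fin.lt_def.mpr (by omega))
  -- L3
  have hL3 : ∀ i : Fin (2*M+e+3), (i:ℕ) < (a:ℕ) → (b:ℕ) < (π i : ℕ) := by
    intro i hi
    have s1 : ¬ (π i < π c) := fun h3 =>
      not_occ π a b c hu i b c (fun hcc => by rw [hcc.1] at hi; omega)
        ⟨Fin.lt_def.mpr (by omega), hbc', h3, hv2⟩
    have hic : i ≠ c := fun h => by rw [h] at hi; omega
    have hn1 : ¬ ((π i : ℕ) < (π c : ℕ)) := fun h => s1 (Fin.lt_def.mpr h)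
    have hn2 : (π i : ℕ) ≠ (π c : ℕ) := fun h => hic (π.injective (Fin.ext h))
    omega
  -- L4
  have hL4 : ∀ y : Fin (2*M+e+3), (b:ℕ) < (y:ℕ) → (y:ℕ) < (c:ℕ) → (π y : ℕ) < (a:ℕ) := by
    intro y h1 h2
    have hyc : y ≠ c := fun h => by rw [h] at h2; omega
    have s1 : ¬ (π c < π y) := fun h4 =>
      not_occ π a b c hu a y c (fun hcc => by rw [hcc.2.1] at h1; omega)
        ⟨Fin.lt_def.mpr (by omega), Fin.lt_def.mpr (by omega), hv1, h4⟩
    have hπy_lt_b : (π y : ℕ) < (b:ℕ) := by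
      have hn1 : ¬ ((π c : ℕ) < (π y : ℕ)) := fun h => s1 (Fin.lt_def.mpr h)
      have hn2 : (π y : ℕ) ≠ (π c : ℕ) := fun h => hyc (π.injective (Fin.ext h))
      omega
    have s2 : ¬ (π a < π y ∧ π y < π b) := fun hcc =>
      not_occ π a b c hu a b y (fun h3 => hyc h3.2.2)
        ⟨hab, Fin.lt_def.mpr (by omega), hcc.1, hcc.2⟩
    have hya : π y ≠ π a := fun h => by
      have := π.injective h
      rw [this] at h1; omega
    have hya' : (π y : ℕ) ≠ (a:ℕ) := fun h => hya (Fin.ext (by omega))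
    by_contra hcon
    exact s2 ⟨Fin.lt_def.mpr (by omega), Fin.lt_def.mpr (by omega)⟩
  -- L5
  have hL5 : ∀ y : Fin (2*M+e+3), (c:ℕ) < (y:ℕ) → π y = y ∨ (π y : ℕ) < (a:ℕ) := by
    intro y hy
    by_cases hfix : π y = y
    · exact Or.inl hfix
    right
    have hinvy : π (π y) = y := hinv y
    have h1 : (π y : ℕ) ≠ (a:ℕ) := fun h => by
      have : π y = a := Fin.ext h
      rw [this, hfa] at hinvy
      rw [← hinvy] at hy; omega
    have h2 : (π y : ℕ) ≠ (b:ℕ) := fun h => by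
      have : π y = b := Fin.ext h
      rw [this, hbc] at hinvy
      rw [← hinvy] at hy; omega
    have h3 : (π y : ℕ) ≠ (c:ℕ) := fun h => by
      have : π y = c := Fin.ext h
      rw [this, hcb] at hinvy
      rw [← hinvy] at hy; omega
    have h4 : ¬ ((b:ℕ) < (π y:ℕ) ∧ (π y:ℕ) < (c:ℕ)) := fun hh => by
      have := hL4 (π y) hh.1 hh.2
      rw [show ((π (π y) : Fin (2*M+e+3)) : ℕ) = (y:ℕ) from congrArg Fin.val hinvy] at this
      omega
    have h5 : ¬ ((c:ℕ) < (π y:ℕ)) := by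
      intro hgt
      have hyne : (y:ℕ) ≠ (π y:ℕ) := fun h => hfix (Fin.ext h.symm)
      rcases Nat.lt_or_ge (y:ℕ) (π y:ℕ) with hlt | hge
      · exact not_occ π a b c hu b y (π y) (fun hcc => by rw [hcc.1] at hab'; omega)
          ⟨Fin.lt_def.mpr (by omega), Fin.lt_def.mpr (by omega),
           Fin.lt_def.mpr (by rw [hπbv, show ((π (π y) : Fin _) : ℕ) = (y:ℕ) from
             congrArg Fin.val hinvy]; omega),
           Fin.lt_def.mpr (by rw [show ((π (π y) : Fin _) : ℕ) = (y:ℕ) from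
             congrArg Fin.val hinvy]; omega)⟩
      · exact not_occ π a b c hu b (π y) y (fun hcc => by rw [hcc.1] at hab'; omega)
          ⟨Fin.lt_def.mpr (by omega), Fin.lt_def.mpr (by omega),
           Fin.lt_def.mpr (by rw [hπbv]; omega),
           Fin.lt_def.mpr (by rw [show ((π (π y) : Fin _) : ℕ) = (y:ℕ) from
             congrArg Fin.val hinvy]; omega)⟩
    omega
  -- counting
  classical
  set Sf := Finset.univ.filter (fun i : Fin (2*M+e+3) => (a:ℕ)+2 ≤ (π i : ℕ)) with hSf
  set Vf := Finset.univ.filter (fun v : Fin (2*M+e+3) => (a:ℕ)+2 ≤ (v : ℕ)) with hVf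
  set Ff := Finset.univ.filter (fun i : Fin (2*M+e+3) => (c:ℕ) < (i:ℕ) ∧ π i = i) with hFf
  have himg : Sf.image π = Vf := by
    ext v
    simp only [hSf, hVf, Finset.mem_image, Finset.mem_filter, Finset.mem_univ, true_and]
    constructor
    · rintro ⟨i, hi, rfl⟩; exact hi
    · intro hv; exact ⟨π v, by rw [show π (π v) = v from hinv v]; exact hv, hinv v⟩
  have hcard1 : Sf.card = Vf.card := by
    rw [← himg, Finset.card_image_of_injective _ π.injective]
  have hcn : (a:ℕ)+2 < 2*M+e+3 := by have := c.isLt; omega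
  have hVcard : Vf.card = 2*M+e+3 - ((a:ℕ)+2) := by
    have hiv : Vf = Finset.Ici (⟨(a:ℕ)+2, hcn⟩ : Fin (2*M+e+3)) := by
      ext v
      simp only [hVf, Finset.mem_filter, Finset.mem_univ, true_and, Finset.mem_Ici, Fin.le_def]
    rw [hiv, Fin.card_Ici]
  have hSdec : Sf = ((Finset.univ.filter (fun i : Fin (2*M+e+3) => (i:ℕ) < (a:ℕ))) ∪ {b}) ∪ Ff := by
    ext i
    simp only [hSf, hFf, Finset.mem_union, Finset.mem_filter, Finset.mem_univ, true_and,
      Finset.mem_singleton]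
    constructor
    · intro hi
      rcases Nat.lt_or_ge (i:ℕ) (a:ℕ) with h | h
      · exact Or.inl (Or.inl h)
      rcases Nat.eq_or_lt_of_le h with h2 | h2
      · exfalso; have : i = a := Fin.ext h2.symm
        rw [this, hπav] at hi; omega
      rcases Nat.eq_or_lt_of_le (show (a:ℕ)+1 ≤ (i:ℕ) from h2) with h3 | h3
      · exact Or.inl (Or.inr (Fin.ext (by omega)))
      rcases Nat.lt_or_ge (i:ℕ) (c:ℕ) with h4 | h4
      · exfalso; have := hL4 i (by omega) h4; omega
      rcases Nat.eq_or_lt_of_le h4 with h5 | h5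
      · exfalso; have : i = c := Fin.ext h5.symm
        rw [this, hπcv] at hi; omega
      · rcases hL5 i h5 with hfix | hsm
        · exact Or.inr ⟨h5, hfix⟩
        · exfalso; omega
    · intro hi
      rcases hi with (h | h) | ⟨h1, h2⟩
      · have := hL3 i h; omega
      · rw [h, hπbv]; omega
      · rw [show (π i : ℕ) = (i:ℕ) from congrArg Fin.val h2]; omega
  have hFle : Ff.card ≤ 1 := by
    rw [Finset.card_le_one]
    intro f1 hf1 g1 hg1
    simp only [hFf, Finset.mem_filter, Finset.mem_univ, true_and] at hf1 hg1
    by_contra hne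
    have habc : a < c := hab.trans hbc'
    have hπf1 : (π f1 : ℕ) = (f1:ℕ) := congrArg Fin.val hf1.2
    have hπg1 : (π g1 : ℕ) = (g1:ℕ) := congrArg Fin.val hg1.2
    rcases lt_or_gt_of_ne hne with h | h
    · exact h1234 ⟨a, c, f1, g1, habc, Fin.lt_def.mpr hf1.1, h,
        Fin.lt_def.mpr (by omega), Fin.lt_def.mpr (by omega),
        Fin.lt_def.mpr (by have := Fin.lt_def.mp h; omega)⟩
    · exact h1234 ⟨a, c, g1, f1, habc, Fin.lt_def.mpr hg1.1, h,
        Fin.lt_def.mpr (by omega), Fin.lt_def.mpr (by omega),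
        Fin.lt_def.mpr (by have := Fin.lt_def.mp h; omega)⟩
  have hdisj1 : Disjoint (Finset.univ.filter (fun i : Fin (2*M+e+3) => (i:ℕ) < (a:ℕ))) {b} := by
    rw [Finset.disjoint_singleton_right]
    simp only [Finset.mem_filter, Finset.mem_univ, true_and]
    omega
  have hdisj2 : Disjoint ((Finset.univ.filter (fun i : Fin (2*M+e+3) => (i:ℕ) < (a:ℕ))) ∪ {b}) Ff := by
    rw [Finset.disjoint_union_left, Finset.disjoint_singleton_left]
    constructor
    · rw [Finset.disjoint_left]
      intro x hx hx2
      simp only [Finset.mem_filter, Finset.mem_univ, true_and] at hx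
      simp only [hFf, Finset.mem_filter, Finset.mem_univ, true_and] at hx2
      omega
    · simp only [hFf, Finset.mem_filter, Finset.mem_univ, true_and]
      intro hcc
      omega
  have hlow : (Finset.univ.filter (fun i : Fin (2*M+e+3) => (i:ℕ) < (a:ℕ))).card = (a:ℕ) := by
    have hiv : (Finset.univ.filter (fun i : Fin (2*M+e+3) => (i:ℕ) < (a:ℕ))) = Finset.Iio a := by
      ext v
      simp only [Finset.mem_filter, Finset.mem_univ, true_and, Finset.mem_Iio, Fin.lt_def]
    rw [hiv, Fin.card_Iio]
  have hScard : Sf.card = (a:ℕ) + 1 + Ff.card := by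
    rw [hSdec, Finset.card_union_of_disjoint hdisj2, Finset.card_union_of_disjoint hdisj1,
      hlow, Finset.card_singleton]
  have haM : (a:ℕ) = M ∧ Ff.card = e := by
    have h1 : 2*M+e+3 - ((a:ℕ)+2) = (a:ℕ) + 1 + Ff.card := by
      rw [← hVcard, ← hcard1, hScard]
    constructor <;> omega
  -- extract the fixed point (e = 1)
  obtain ⟨f, hf⟩ : ∃ f : Fin (2*M+e+3), (e = 1 → f ∈ Ff) := by
    rcases Nat.eq_zero_or_pos e with h | h
    · exact ⟨b, fun h1 => absurd (h ▸ h1) (by omega)⟩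
    · have he1 : e = 1 := by omega
      obtain ⟨f, hfs⟩ := Finset.card_eq_one.mp (by rw [haM.2, he1])
      exact ⟨f, fun _ => by rw [hfs]; exact Finset.mem_singleton_self f⟩
  have hfF : e = 1 → ((c:ℕ) < (f:ℕ) ∧ π f = f) := fun h1 => by
    have := hf h1
    simp only [hFf, Finset.mem_filter, Finset.mem_univ, true_and] at this
    exact this
  have hbM : (b:ℕ) = M+1 := by omega
  have hcM : M+2 ≤ (c:ℕ) := by omega
  -- bigness of π at PmPos positions
  have hbig : ∀ s : Fin (M+1+e), M+2 ≤ (π (PmPos M e f s) : ℕ) := by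
    intro s
    have hpv := PmPos_val M e f s
    split_ifs at hpv with g1 g2
    · have := hL3 (PmPos M e f s) (by omega)
      omega
    · have hPb : PmPos M e f s = b := Fin.ext (by omega)
      rw [hPb, hπbv]; omega
    · have he1 : e = 1 := by have := s.isLt; omega
      obtain ⟨hcf, hffix⟩ := hfF he1
      rw [show PmPos M e f s = f from Fin.ext (by omega),
        show (π f : ℕ) = (f:ℕ) from congrArg Fin.val hffix]
      omega
  have hef : M+1+e ≤ M+1 ∨ M+2 ≤ (f:ℕ) := by
    rcases Nat.eq_zero_or_pos e with h | h
    · left; omega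
    · right; have := (hfF (by omega)).1; omega
  have hPinj : Function.Injective (PmPos M e f) := by
    intro s t hst
    have hs := PmPos_val M e f s
    have ht := PmPos_val M e f t
    have hval := congrArg Fin.val hst
    have hsl := s.isLt; have htl := t.isLt
    apply Fin.ext
    split_ifs at hs ht <;> omega
  have hqb : ∀ s : Fin (M+1+e), ((π (PmPos M e f s) : ℕ) - (M+2)) < M+1+e := fun s => by
    have := (π (PmPos M e f s)).isLt; omega
  have hginj : Function.Injective
      (fun s => (⟨(π (PmPos M e f s) : ℕ) - (M+2), hqb s⟩ : Fin (M+1+e))) := by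
    intro s t hst
    have h1 := hbig s; have h2 := hbig t
    have hval : (π (PmPos M e f s) : ℕ) - (M+2) = (π (PmPos M e f t) : ℕ) - (M+2) :=
      congrArg Fin.val hst
    have : π (PmPos M e f s) = π (PmPos M e f t) := Fin.ext (by omega)
    exact hPinj (π.injective this)
  set q : Equiv.Perm (Fin (M+1+e)) :=
    Equiv.ofBijective _ (Finite.injective_iff_bijective.mp hginj) with hq
  have hqval : ∀ s : Fin (M+1+e), (q s : ℕ) = (π (PmPos M e f s) : ℕ) - (M+2) := fun s => rfl
  -- position maps agree
  have hkey : ∀ s : Fin (M+1+e), ((PmPos M e f s) : ℕ) = PmN q (s:ℕ) := by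
    intro s
    have hpv := PmPos_val M e f s
    have hsl := s.isLt
    rw [PmN]
    split_ifs at hpv ⊢ with g1 g2
    · omega
    · omega
    · have he1 : e = 1 := by omega
      have hqv : qv q (M+1) = (q s : ℕ) := qv_at q s (M+1) (by omega)
      have hPf : PmPos M e f s = f := Fin.ext (by omega)
      rw [hqv, hqval s, hPf, show (π f : ℕ) = (f:ℕ) from congrArg Fin.val (hfF he1).2]
      have := (hfF he1).1
      omega
  have hval_at : ∀ s : Fin (M+1+e), phi he q (PmPos M e f s) = π (PmPos M e f s) := by
    intro s
    apply Fin.ext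
    rw [phi_val, hkey s, phiN_Pm he q s]
    have h1 := hbig s
    have h2 := hqval s
    omega
  have hagree : ∀ i, phi he q i = π i := by
    intro i
    have hil := i.isLt
    rcases Nat.lt_or_ge (i:ℕ) M with h1 | h1
    · obtain ⟨s, hs⟩ : ∃ s : Fin (M+1+e), (s:ℕ) = (i:ℕ) := ⟨⟨(i:ℕ), by omega⟩, rfl⟩
      have hieq : i = PmPos M e f s := Fin.ext (by rw [PmPos_val]; split_ifs <;> omega)
      rw [hieq]; exact hval_at s
    rcases Nat.eq_or_lt_of_le h1 with h2 | h2
    · have : i = a := Fin.ext (by omega)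
      rw [this]
      apply Fin.ext
      rw [phi_val, show ((a : Fin (2*M+e+3)):ℕ) = M from by omega, phiN_a]
      omega
    rcases Nat.eq_or_lt_of_le (show M+1 ≤ (i:ℕ) from h2) with h3 | h3
    · obtain ⟨s, hs⟩ : ∃ s : Fin (M+1+e), (s:ℕ) = M := ⟨⟨M, by omega⟩, rfl⟩
      have hieq : i = PmPos M e f s := Fin.ext (by rw [PmPos_val]; split_ifs <;> omega)
      rw [hieq]; exact hval_at s
    by_cases hife : e = 1 ∧ i = f
    · obtain ⟨s, hs⟩ : ∃ s : Fin (M+1+e), (s:ℕ) = M+1 := ⟨⟨M+1, by omega⟩, rfl⟩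
      have hifv : (i:ℕ) = (f:ℕ) := congrArg Fin.val hife.2
      have hieq : i = PmPos M e f s := Fin.ext (by rw [PmPos_val]; split_ifs <;> omega)
      rw [hieq]; exact hval_at s
    · -- π i is at a PmPos position
      have hπi : ∃ s : Fin (M+1+e), π i = PmPos M e f s := by
        have hne_a : (π i : ℕ) ≠ (a:ℕ) := by
          intro h
          have hπia : π i = a := Fin.ext h
          have := hinv i
          rw [hπia, hfa] at this
          rw [← this] at h3; omega
        have hsm : (π i : ℕ) < M ∨ (π i : ℕ) = M+1 := by
          rcases Nat.lt_or_ge (i:ℕ) (c:ℕ) with h4 | h4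
          · have := hL4 i (by omega) h4; omega
          rcases Nat.eq_or_lt_of_le h4 with h5 | h5
          · have : i = c := Fin.ext h5.symm
            rw [this, hπcv]; omega
          · rcases hL5 i h5 with hfix | hsm2
            · exfalso
              have hiF : i ∈ Ff := by
                simp only [hFf, Finset.mem_filter, Finset.mem_univ, true_and]
                exact ⟨h5, hfix⟩
              rcases Nat.eq_zero_or_pos e with hz | hz
              · rw [Finset.card_eq_zero.mp (show Ff.card = 0 from by rw [haM.2, hz])] at hiF
                exact absurd hiF (Finset.notMem_empty i)
              · have he1 : e = 1 := by omega
                exact hife ⟨he1, Finset.card_le_one.mp hFle i hiF f (hf he1)⟩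
            · omega
        rcases hsm with h | h
        · obtain ⟨s, hs⟩ : ∃ s : Fin (M+1+e), (s:ℕ) = (π i:ℕ) := ⟨⟨(π i:ℕ), by omega⟩, rfl⟩
          exact ⟨s, Fin.ext (by rw [PmPos_val]; split_ifs <;> omega)⟩
        · obtain ⟨s, hs⟩ : ∃ s : Fin (M+1+e), (s:ℕ) = M := ⟨⟨M, by omega⟩, rfl⟩
          exact ⟨s, Fin.ext (by rw [PmPos_val]; split_ifs <;> omega)⟩
      obtain ⟨s, hπs⟩ := hπi
      have h1' : phi he q (π i) = π (π i) := by rw [hπs]; exact hval_at s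
      have h2' : phi he q (π i) = i := by rw [h1']; exact hinv i
      have h3' : phi he q (phi he q (π i)) = π i := phi_isInvol he q (π i)
      rw [h2'] at h3'
      exact h3'
  exact ⟨q, Equiv.ext hagree⟩

end S19

namespace S19

variable {M e : ℕ}

lemma phi_inj (M e : ℕ) (he : e ≤ 1) (q q' : Equiv.Perm (Fin (M+1+e)))
    (h : phi he q = phi he q') : q = q' := by
  have hN : ∀ x : ℕ, x ≤ 2*M+e+2 → phiN q x = phiN q' x := fun x hx => by
    have h2 := Equiv.ext_iff.mp h ⟨x, by omega⟩
    exact congrArg Fin.val h2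
  have hlow : ∀ s : Fin (M+1+e), (s:ℕ) ≤ M → q s = q' s := by
    intro s hsM
    rcases Nat.lt_or_ge (s:ℕ) M with h1 | h1
    · have h2 := hN (s:ℕ) (by have := s.isLt; omega)
      simp only [phiN, if_pos h1] at h2
      apply Fin.ext
      rw [← qv_eq q s, ← qv_eq q' s]
      omega
    · have hsM' : (s:ℕ) = M := by omega
      have h2 := hN (M+1) (by omega)
      simp only [phiN, if_neg (show ¬ (M+1 < M) from by omega),
        if_neg (show ¬ (M+1 = M) from by omega), if_pos rfl, ite_true] at h2
      apply Fin.ext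
      rw [← qv_eq q s, ← qv_eq q' s, hsM']
      omega
  apply Equiv.ext
  intro s
  rcases Nat.lt_or_ge (s:ℕ) (M+1) with h1 | h1
  · exact hlow s (by omega)
  · by_contra hne
    obtain ⟨w, hw⟩ := q'.surjective (q s)
    have hwne : w ≠ s := fun hh => hne (by rw [← hw, hh])
    have hwM : (w:ℕ) ≤ M := by
      have := w.isLt; have := s.isLt
      by_contra hcc
      exact hwne (Fin.ext (by omega))
    have h2 := hlow w hwM
    rw [hw] at h2
    exact hwne (q.injective h2)

lemma av123_1234 {n : ℕ} (π : Equiv.Perm (Fin n)) (h : Avoids123 π) : Avoids1234 π :=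
  fun ⟨i, j, k, _, h1, h2, _, h4, h5, _⟩ => h ⟨i, j, k, h1, h2, h4, h5⟩

lemma main_card (M e : ℕ) (he : e ≤ 1) :
    Nat.card {π : Equiv.Perm (Fin (2*M+e+3)) //
      IsInvolution π ∧ Avoids1234 π ∧ Contains132Once π}
    = Nat.card {q : Equiv.Perm (Fin (M+1+e)) //
      (Avoids132 q ∧ Avoids1234 q) ∧ (M+1 < M+1+e → qv q (M+1) ≠ 0)} := by
  symm
  apply Nat.card_eq_of_bijective (fun x =>
    ⟨phi he x.1, phi_isInvol he x.1, phi_1234 he x.1 x.2.1.2,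
      phi_132once he x.1 x.2.1.1 x.2.2⟩)
  constructor
  · intro x y hxy
    exact Subtype.ext (phi_inj M e he x.1 y.1 (congrArg Subtype.val hxy))
  · intro y
    obtain ⟨q, hq⟩ := phi_surj M e he y.1 y.2.1 y.2.2.1 y.2.2.2
    refine ⟨⟨q, ⟨?_, ?_⟩, ?_⟩, Subtype.ext hq⟩
    · by_contra h132
      exact (pull132 he q h132) (by rw [hq]; exact y.2.2.2)
    · exact pull1234 he q (by rw [hq]; exact y.2.2.1)
    · intro hM1 hz
      exact (pull_qlast he q hM1 hz) (by rw [hq]; exact y.2.2.2)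

lemma main_card123 (M : ℕ) :
    Nat.card {π : Equiv.Perm (Fin (2*M+0+3)) //
      IsInvolution π ∧ Avoids123 π ∧ Contains132Once π}
    = Nat.card {q : Equiv.Perm (Fin (M+1+0)) // Avoids132 q ∧ Avoids123 q} := by
  symm
  apply Nat.card_eq_of_bijective (fun x =>
    ⟨phi (e := 0) (by omega) x.1, phi_isInvol _ x.1, phi_123 (by omega) rfl x.1 x.2.2,
      phi_132once (by omega) x.1 x.2.1 (fun h => absurd h (by omega))⟩)
  constructor
  · intro x y hxy
    exact Subtype.ext (phi_inj M 0 (by omega) x.1 y.1 (congrArg Subtype.val hxy))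
  · intro y
    obtain ⟨q, hq⟩ := phi_surj M 0 (by omega) y.1 y.2.1 (av123_1234 y.1 y.2.2.1) y.2.2.2
    refine ⟨⟨q, ?_, ?_⟩, Subtype.ext hq⟩
    · by_contra h132
      exact (pull132 (by omega) q h132) (by rw [hq]; exact y.2.2.2)
    · exact pull123 (by omega) q (by rw [hq]; exact y.2.2.1)

lemma even123 (M : ℕ) :
    Nat.card {π : Equiv.Perm (Fin (2*M+1+3)) //
      IsInvolution π ∧ Avoids123 π ∧ Contains132Once π} = 0 := by
  have hE : IsEmpty {π : Equiv.Perm (Fin (2*M+1+3)) //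
      IsInvolution π ∧ Avoids123 π ∧ Contains132Once π} := by
    refine ⟨fun x => ?_⟩
    obtain ⟨q, hq⟩ := phi_surj M 1 (by omega) x.1 x.2.1 (av123_1234 x.1 x.2.2.1) x.2.2.2
    have h132 : Avoids132 q := by
      by_contra h
      exact (pull132 (by omega) q h) (by rw [hq]; exact x.2.2.2)
    have h0 : qv q (M+1) ≠ 0 := fun hz =>
      (pull_qlast (by omega) q (by omega) hz) (by rw [hq]; exact x.2.2.2)
    exact (phi_not123 (by omega) q (by omega) h132 h0) (by rw [hq]; exact x.2.2.1)
  exact Nat.card_of_isEmpty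

lemma small_empty (n : ℕ) (hn : n < 3) (π : Equiv.Perm (Fin n)) : ¬ Contains132Once π := by
  rw [contains132Once_iff]
  intro h
  obtain ⟨t, ht⟩ := Finset.card_eq_one.mp h
  have : t ∈ occSet π := by rw [ht]; exact Finset.mem_singleton_self t
  rw [occSet, Finset.mem_filter] at this
  obtain ⟨-, h1, h2, -⟩ := this
  have := Fin.lt_def.mp h1
  have := Fin.lt_def.mp h2
  have := t.2.2.isLt
  omega

end S19

namespace S19

lemma bridgeB (M : ℕ) :
    Nat.card {q : Equiv.Perm (Fin (M+1+0)) //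
      (Avoids132 q ∧ Avoids1234 q) ∧ (M+1 < M+1+0 → qv q (M+1) ≠ 0)} = Nat.fib (2*M+1) := by
  calc Nat.card {q : Equiv.Perm (Fin (M+1+0)) //
        (Avoids132 q ∧ Avoids1234 q) ∧ (M+1 < M+1+0 → qv q (M+1) ≠ 0)}
      = Nat.card {q : Equiv.Perm (Fin (M+1)) // Bc q} :=
        Nat.card_congr (Equiv.subtypeEquivRight (fun q =>
          ⟨fun hh => hh.1, fun hh => ⟨hh, fun hc => absurd hc (by omega)⟩⟩))
    _ = Nat.fib (2*M+1) := (cBD_closed M).1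

lemma bridgeC (M : ℕ) :
    Nat.card {q : Equiv.Perm (Fin (M+1+1)) //
      (Avoids132 q ∧ Avoids1234 q) ∧ (M+1 < M+1+1 → qv q (M+1) ≠ 0)} = Nat.fib (2*M+2) := by
  calc Nat.card {q : Equiv.Perm (Fin (M+1+1)) //
        (Avoids132 q ∧ Avoids1234 q) ∧ (M+1 < M+1+1 → qv q (M+1) ≠ 0)}
      = Nat.card {q : Equiv.Perm (Fin (M+2)) // Bc q ∧ q (Fin.last (M+1)) ≠ 0} := by
        apply Nat.card_congr
        apply Equiv.subtypeEquivRight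
        intro q
        have hv : qv q (M+1) = (q (Fin.last (M+1)) : ℕ) :=
          qv_at (e := 1) q (Fin.last (M+1)) (M+1) (Fin.val_last _)
        constructor
        · rintro ⟨h1, h2⟩
          refine ⟨h1, fun hz => h2 (by omega) ?_⟩
          rw [hv, hz]; rfl
        · rintro ⟨h1, h2⟩
          refine ⟨h1, fun _ hz => h2 ?_⟩
          rw [hv] at hz
          exact Fin.ext (by rw [hz]; rfl)
    _ = Nat.fib (2*M+2) := cC_closed M

lemma bridgeN (M : ℕ) :
    Nat.card {q : Equiv.Perm (Fin (M+1+0)) // Avoids132 q ∧ Avoids123 q} = 2^M := by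
  calc Nat.card {q : Equiv.Perm (Fin (M+1+0)) // Avoids132 q ∧ Avoids123 q}
      = Nat.card {q : Equiv.Perm (Fin (M+1)) // Nc q} :=
        Nat.card_congr (Equiv.subtypeEquivRight (fun q => Iff.rfl))
    _ = 2^M := cN_closed M

end S19


theorem stmt19 (n : ℕ) :
    (n % 2 = 1 → 3 ≤ n →
      Nat.card {π : Equiv.Perm (Fin n) //
          IsInvolution π ∧ Avoids123 π ∧ Contains132Once π} = 2 ^ ((n - 3) / 2)) ∧
    (n % 2 = 0 →
      Nat.card {π : Equiv.Perm (Fin n) //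
          IsInvolution π ∧ Avoids123 π ∧ Contains132Once π} = 0) ∧
    (3 ≤ n →
      Nat.card {π : Equiv.Perm (Fin n) //
          IsInvolution π ∧ Avoids1234 π ∧ Contains132Once π} = Nat.fib (n - 2)) := by
  refine ⟨?_, ?_, ?_⟩
  · intro hodd h3
    obtain ⟨M, rfl⟩ : ∃ M, n = 2*M+0+3 := ⟨(n-3)/2, by omega⟩
    rw [S19.main_card123 M, S19.bridgeN M]
    congr 1
    omega
  · intro heven
    rcases Nat.lt_or_ge n 3 with h3 | h3
    · have : IsEmpty {π : Equiv.Perm (Fin n) //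
          IsInvolution π ∧ Avoids123 π ∧ Contains132Once π} :=
        ⟨fun x => S19.small_empty n h3 x.1 x.2.2.2⟩
      exact Nat.card_of_isEmpty
    · obtain ⟨M, rfl⟩ : ∃ M, n = 2*M+1+3 := ⟨(n-4)/2, by omega⟩
      exact S19.even123 M
  · intro h3
    rcases Nat.mod_two_eq_zero_or_one n with h | h
    · obtain ⟨M, rfl⟩ : ∃ M, n = 2*M+1+3 := ⟨(n-4)/2, by omega⟩
      rw [S19.main_card M 1 (by omega), S19.bridgeC M]
      congr 1
    · obtain ⟨M, rfl⟩ : ∃ M, n = 2*M+0+3 := ⟨(n-3)/2, by omega⟩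
      rw [S19.main_card M 0 (by omega), S19.bridgeB M]
      congr 1
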